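/- arXiv:1304.4450 — 8 statements merged into one kernel-verified Lean document; each statement's English description precedes it below -/
import Mathlib

section
/- Let F be the distribution function of a random variable X, q ∈ ℝ, and q⁻ = inf(F⁻¹(F(q))). Then F⁻¹(F((-∞, q⁻))) = (-∞, q⁻), i.e., the preimage under F of the image under F of the open ray below q⁻ equals that ray itself. -/
open MeasureTheory Set

section RightContinuous

variable {β : Type*} [PartialOrder β] [TopologicalSpace β] [ClosedIciTopology β] {F : ℝ → β}

/-- Every point strictly above `inf s` is strictly above some point of `s`, so right-continuity
at `x` carries a lower bound from `s` over to `x`, also when `x = inf s`. -/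
theorem le_apply_of_sInf_le (hmono : Monotone F) {x : ℝ} (hcont : ContinuousWithinAt F (Ici x) x)
    {s : Set ℝ} {c : β} (hs : ∀ p ∈ s, c ≤ F p) (hx : sInf (((↑) : ℝ → EReal) '' s) ≤ x) :
    c ≤ F x := by
  refine ge_of_tendsto (hcont.mono Ioi_subset_Ici_self) ?_
  filter_upwards [self_mem_nhdsWithin] with y (hxy : x < y)
  obtain ⟨_, ⟨p, hp, rfl⟩, hpy⟩ := sInf_lt_iff.mp (hx.trans_lt (EReal.coe_lt_coe hxy))
  exact (hs p hp).trans (hmono (EReal.coe_le_coe_iff.mp hpy.le))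

theorem preimage_image_setOf_lt_sInf_preimage (hmono : Monotone F)
    (hcont : ∀ x, ContinuousWithinAt F (Ici x) x) (q : ℝ) :
    F ⁻¹' (F '' {x : ℝ | (x : EReal) < sInf ((↑) '' (F ⁻¹' {F q}))}) =
      {x : ℝ | (x : EReal) < sInf ((↑) '' (F ⁻¹' {F q}))} := by
  set qm : EReal := sInf ((↑) '' (F ⁻¹' {F q}))
  have hqm_le : ∀ p, F p = F q → qm ≤ p := fun p hp => sInf_le ⟨p, hp, rfl⟩
  refine Subset.antisymm ?_ (subset_preimage_image F _)
  rintro x ⟨y, hy : (y : EReal) < qm, hyx⟩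
  by_contra hx
  replace hx : qm ≤ x := not_lt.mp hx
  have hqx : F q ≤ F x := le_apply_of_sInf_le hmono (hcont x) (fun _ hp => hp.ge) hx
  have hyq : F y ≤ F q := hmono (EReal.coe_le_coe_iff.mp (hy.le.trans (hqm_le q rfl)))
  exact (hqm_le y (le_antisymm hyq (hyx ▸ hqx))).not_gt hy

end RightContinuous

/-- For the cdf `F` of a random variable `X` and `q⁻ = inf F⁻¹(F q)`
(in the extended reals), the preimage under `F` of the image under `F` of the open
ray below `q⁻` equals that ray itself: `F⁻¹(F((-∞, q⁻))) = (-∞, q⁻)`. -/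
theorem stmt1 {Ω : Type*} [MeasurableSpace Ω] (μ : Measure Ω) [IsProbabilityMeasure μ]
    (X : Ω → ℝ) (hX : Measurable X)
    (F : ℝ → ℝ) (hF : ∀ q, F q = (μ {ω | X ω ≤ q}).toReal)
    (q : ℝ) (qm : EReal)
    (hqm : qm = sInf ((fun x : ℝ => (x : EReal)) '' (F ⁻¹' {F q}))) :
    F ⁻¹' (F '' {x : ℝ | (x : EReal) < qm}) = {x : ℝ | (x : EReal) < qm} := by
  have hF_cdf : F = ProbabilityTheory.cdf (μ.map X) := by
    have := Measure.isProbabilityMeasure_map (μ := μ) hX.aemeasurable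
    ext x
    rw [ProbabilityTheory.cdf_eq_real, measureReal_def, hF, Measure.map_apply hX measurableSet_Iic]
    rfl
  subst hqm hF_cdf
  exact preimage_image_setOf_lt_sInf_preimage (ProbabilityTheory.monotone_cdf _)
    (fun x => (ProbabilityTheory.cdf _).right_continuous x) q
end

section
/- Let X : Ω → ℝ be a random variable with distribution function F. Then the σ-algebra generated by F ∘ X and the σ-algebra generated by X agree up to μ-null sets: every set in σ(X) differs from a set in σ(F∘X) by a set of μ-measure zero, and conversely σ(F∘X) ⊆ σ(X). -/
open MeasureTheory Set MeasurableSpace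

/-- `σ(F∘X)` and `σ(X)` agree up to `μ`-null sets: every set of
`σ(X)` differs from a set of `σ(F∘X)` by a `μ`-null set, and `σ(F∘X) ⊆ σ(X)`. -/
theorem stmt3 {Ω : Type*} [MeasurableSpace Ω] (μ : Measure Ω) [IsProbabilityMeasure μ]
    (X : Ω → ℝ) (hX : Measurable X)
    (F : ℝ → ℝ) (hF : ∀ q, F q = (μ {ω | X ω ≤ q}).toReal) :
    (∀ s : Set Ω, MeasurableSet[MeasurableSpace.comap X (borel ℝ)] s →
      ∃ t : Set Ω, MeasurableSet[MeasurableSpace.comap (F ∘ X) (borel ℝ)] t ∧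
        μ (symmDiff s t) = 0) ∧
    MeasurableSpace.comap (F ∘ X) (borel ℝ) ≤ MeasurableSpace.comap X (borel ℝ) := by
  have hFmono : Monotone F := by
    intro a b hab
    rw [hF, hF]
    exact ENNReal.toReal_mono (measure_ne_top μ _)
      (measure_mono fun ω hω => le_trans hω hab)
  constructor
  · -- Part 1
    have L1 : ∀ q b : ℝ, q ≤ b → F b ≤ F q → μ (X ⁻¹' Ioc q b) = 0 := by
      intro q b hqb hFb
      have hFeq : F b = F q := le_antisymm hFb (hFmono hqb)
      have hmeq : μ {ω | X ω ≤ b} = μ {ω | X ω ≤ q} := by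
        have := hF b
        rw [hFeq, hF q] at this
        exact (ENNReal.toReal_eq_toReal_iff' (measure_ne_top μ _) (measure_ne_top μ _)).mp
          this.symm
      have hset : X ⁻¹' Ioc q b = {ω | X ω ≤ b} \ {ω | X ω ≤ q} := by
        ext ω; simp [Ioc, and_comm, not_le]
      rw [hset]
      refine (measure_diff (fun ω hω => le_trans hω hqb)
        ((hX measurableSet_Iic).nullMeasurableSet) (measure_ne_top μ _)).trans ?_
      exact tsub_eq_zero_of_le (le_of_eq hmeq)
    have key : ∀ q : ℝ,
        ∃ t, MeasurableSet[MeasurableSpace.comap (F ∘ X) (borel ℝ)] t ∧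
          μ (symmDiff (X ⁻¹' Iic q) t) = 0 := by
      intro q
      refine ⟨(F ∘ X) ⁻¹' Iic (F q), ⟨Iic (F q), ?_, rfl⟩, ?_⟩
      · borelize ℝ
        exact measurableSet_Iic
      · have hsub : X ⁻¹' Iic q ⊆ (F ∘ X) ⁻¹' Iic (F q) := fun ω hω => hFmono hω
        rw [symmDiff_of_le hsub]
        -- the difference is contained in X ⁻¹' D, D = {x | q < x ∧ F x ≤ F q}
        have hD : ((F ∘ X) ⁻¹' Iic (F q)) \ (X ⁻¹' Iic q)
            ⊆ X ⁻¹' {x | q < x ∧ F x ≤ F q} := by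
          rintro ω ⟨h1, h2⟩
          exact ⟨lt_of_not_ge h2, h1⟩
        refine measure_mono_null hD ?_
        by_cases hA : ∃ b, q ≤ b ∧ F b ≤ F q ∧ ∀ x, q < x → F x ≤ F q → x ≤ b
        · obtain ⟨b, hqb, hFb, hmax⟩ := hA
          refine measure_mono_null (fun ω hω => ?_) (L1 q b hqb hFb)
          exact ⟨hω.1, hmax _ hω.1 hω.2⟩
        · push_neg at hA
          have hcover : X ⁻¹' {x | q < x ∧ F x ≤ F q}
              ⊆ ⋃ (r : ℚ) (_ : q ≤ (r : ℝ) ∧ F r ≤ F q), X ⁻¹' Ioc q (r : ℝ) := by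
            intro ω hω
            obtain ⟨hqx, hFx⟩ := hω
            obtain ⟨x', hx'1, hx'2, hx'3⟩ := hA (X ω) hqx.le hFx
            obtain ⟨r, hr1, hr2⟩ := exists_rat_btwn hx'3
            have hFr : F r ≤ F q := le_trans (hFmono hr2.le) hx'2
            exact mem_iUnion.mpr ⟨r, mem_iUnion.mpr
              ⟨⟨le_trans hqx.le hr1.le, hFr⟩, hqx, hr1.le⟩⟩
          refine measure_mono_null hcover (measure_iUnion_null fun r => ?_)
          exact measure_iUnion_null fun hr => L1 q r hr.1 hr.2
    -- build the σ-algebra of sets approximable by sets of σ(F∘X)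
    set mF := MeasurableSpace.comap (F ∘ X) (borel ℝ) with hmF
    let m' : MeasurableSpace Ω :=
      { MeasurableSet' := fun s => ∃ t, MeasurableSet[mF] t ∧ μ (symmDiff s t) = 0
        measurableSet_empty := ⟨∅, MeasurableSet.empty, by simp⟩
        measurableSet_compl := by
          rintro s ⟨t, ht, hst⟩
          exact ⟨tᶜ, ht.compl, by rwa [compl_symmDiff_compl]⟩
        measurableSet_iUnion := by
          intro f hf
          choose t ht hst using hf
          refine ⟨⋃ i, t i, MeasurableSet.iUnion ht, ?_⟩
          simp only [measure_symmDiff_eq_zero_iff] at hst ⊢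
          exact EventuallyEq.countable_iUnion hst }
    have hle : MeasurableSpace.comap X (borel ℝ) ≤ m' := by
      rw [borel_eq_generateFrom_Iic ℝ, MeasurableSpace.comap_generateFrom]
      refine MeasurableSpace.generateFrom_le ?_
      rintro s ⟨u, ⟨q, rfl⟩, rfl⟩
      exact key q
    exact fun s hs => hle s hs
  · -- Part 2
    have hFm : Measurable F := hFmono.measurable
    rw [← MeasurableSpace.comap_comp]
    refine MeasurableSpace.comap_mono ?_
    borelize ℝ
    exact hFm.comap_le
end

section
/- Let T : Ω → Ω be an ergodic measure-preserving transformation of a probability space and X : Ω → ℝ measurable with distribution function F. Define I_d(ω) = #{r ∈ {1,…,d−1} : X(T^r(ω)) ≤ X(ω)}. Then for μ-almost every ω, the limit lim_{d→∞} I_d(ω)/d exists and equals F(X(ω)). -/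
/-!
For a fixed level `q`, the proportion of times `k < d` with `X (T^k ω) ≤ q` is the Birkhoff average
of the indicator of `{X ≤ q}`, so by the pointwise ergodic theorem it tends to `F q` almost surely,
simultaneously for all `q` in a countable set containing the rationals and the discontinuities of
the monotone function `F`. These averages are monotone in `q`, so at a continuity point `x` of `F`
they are squeezed between their limits at nearby rational levels. Taking `x = X ω`, and discarding
the term `k = 0` that `I_d` omits, gives `I_d(ω)/d → F(X ω)`.

The pointwise ergodic theorem for bounded `f` comes from the maximal ergodic lemma: the `limsup`
and `liminf` of the averages are `T`-invariant, hence a.e. constant, and the lemma forces both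
constants to equal `∫ f`.
-/

open MeasureTheory Set Filter Topology

section LimsupAdd

variable {ι : Type*} {l : Filter ι} [l.NeBot] {u v : ι → ℝ}

lemma Filter.limsup_add_of_tendsto_zero (hu₁ : IsBoundedUnder (· ≤ ·) l u)
    (hu₂ : IsBoundedUnder (· ≥ ·) l u) (hv : Tendsto v l (𝓝 0)) :
    limsup (u + v) l = limsup u l := by
  refine le_antisymm ?_ ?_
  · simpa [hv.limsup_eq] using limsup_add_le hu₂ hu₁ hv.isCoboundedUnder_le hv.isBoundedUnder_le
  · simpa [hv.liminf_eq] using le_limsup_add hu₁ hu₂.isCoboundedUnder_le hv.isBoundedUnder_le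
      hv.isBoundedUnder_ge

lemma Filter.liminf_add_of_tendsto_zero (hu₁ : IsBoundedUnder (· ≤ ·) l u)
    (hu₂ : IsBoundedUnder (· ≥ ·) l u) (hv : Tendsto v l (𝓝 0)) :
    liminf (u + v) l = liminf u l := by
  refine le_antisymm ?_ ?_
  · simpa [hv.limsup_eq, add_comm v] using
      liminf_add_le hv.isBoundedUnder_ge hv.isBoundedUnder_le hu₂ hu₁.isCoboundedUnder_ge
  · simpa [hv.liminf_eq] using le_liminf_add hu₂ hu₁ hv.isBoundedUnder_ge hv.isCoboundedUnder_ge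

end LimsupAdd

section BoundedBirkhoffAverage

variable {Ω : Type*} {T : Ω → Ω} {f : Ω → ℝ} {C : ℝ}

lemma abs_birkhoffAverage_le (hC : ∀ ω, |f ω| ≤ C) (n : ℕ) (ω : Ω) :
    |birkhoffAverage ℝ T f n ω| ≤ C := by
  have hC₀ : 0 ≤ C := (abs_nonneg _).trans (hC ω)
  rcases n.eq_zero_or_pos with rfl | hn
  · simpa using hC₀
  have hn' : (0 : ℝ) < n := Nat.cast_pos.2 hn
  rw [birkhoffAverage, smul_eq_mul, abs_mul, abs_inv, Nat.abs_cast, inv_mul_le_iff₀ hn']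
  calc |birkhoffSum T f n ω| ≤ ∑ k ∈ Finset.range n, |f (T^[k] ω)| :=
        Finset.abs_sum_le_sum_abs _ _
    _ ≤ ∑ _k ∈ Finset.range n, C := Finset.sum_le_sum fun k _ ↦ hC _
    _ = n * C := by simp

lemma isBoundedUnder_le_birkhoffAverage (hC : ∀ ω, |f ω| ≤ C) (ω : Ω) :
    IsBoundedUnder (· ≤ ·) atTop (birkhoffAverage ℝ T f · ω) :=
  isBoundedUnder_of ⟨C, fun n ↦ (abs_le.1 (abs_birkhoffAverage_le hC n ω)).2⟩

lemma isBoundedUnder_ge_birkhoffAverage (hC : ∀ ω, |f ω| ≤ C) (ω : Ω) :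
    IsBoundedUnder (· ≥ ·) atTop (birkhoffAverage ℝ T f · ω) :=
  isBoundedUnder_of ⟨-C, fun n ↦ (abs_le.1 (abs_birkhoffAverage_le hC n ω)).1⟩

lemma birkhoffAverage_apply_eq_add (ω : Ω) :
    (birkhoffAverage ℝ T f · (T ω)) = (birkhoffAverage ℝ T f · ω) + fun n ↦
      birkhoffAverage ℝ T f n (T ω) - birkhoffAverage ℝ T f n ω := by
  ext n
  simp

lemma tendsto_birkhoffAverage_apply_sub_of_abs_le (hC : ∀ ω, |f ω| ≤ C) (ω : Ω) :
    Tendsto (fun n ↦ birkhoffAverage ℝ T f n (T ω) - birkhoffAverage ℝ T f n ω) atTop (𝓝 0) :=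
  tendsto_birkhoffAverage_apply_sub_birkhoffAverage' ℝ
    ((Metric.isBounded_Icc (-C) C).subset (range_subset_iff.2 fun ω ↦ abs_le.1 (hC ω))) T ω

lemma limsup_birkhoffAverage_apply (hC : ∀ ω, |f ω| ≤ C) (ω : Ω) :
    limsup (birkhoffAverage ℝ T f · (T ω)) atTop = limsup (birkhoffAverage ℝ T f · ω) atTop := by
  rw [birkhoffAverage_apply_eq_add]
  exact limsup_add_of_tendsto_zero (isBoundedUnder_le_birkhoffAverage hC ω)
    (isBoundedUnder_ge_birkhoffAverage hC ω) (tendsto_birkhoffAverage_apply_sub_of_abs_le hC ω)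

lemma liminf_birkhoffAverage_apply (hC : ∀ ω, |f ω| ≤ C) (ω : Ω) :
    liminf (birkhoffAverage ℝ T f · (T ω)) atTop = liminf (birkhoffAverage ℝ T f · ω) atTop := by
  rw [birkhoffAverage_apply_eq_add]
  exact liminf_add_of_tendsto_zero (isBoundedUnder_le_birkhoffAverage hC ω)
    (isBoundedUnder_ge_birkhoffAverage hC ω) (tendsto_birkhoffAverage_apply_sub_of_abs_le hC ω)

end BoundedBirkhoffAverage

section MaximalErgodic

variable {Ω : Type*} {T : Ω → Ω} {f : Ω → ℝ}

noncomputable def maxBirkhoffSum (T : Ω → Ω) (f : Ω → ℝ) : ℕ → Ω → ℝ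
  | 0 => 0
  | N + 1 => fun ω ↦ max (maxBirkhoffSum T f N ω) (birkhoffSum T f (N + 1) ω)

lemma maxBirkhoffSum_mono (T : Ω → Ω) (f : Ω → ℝ) (ω : Ω) :
    Monotone (maxBirkhoffSum T f · ω) :=
  monotone_nat_of_le_succ fun _ ↦ le_max_left _ _

lemma birkhoffSum_le_maxBirkhoffSum {n N : ℕ} (h : n ≤ N) (ω : Ω) :
    birkhoffSum T f n ω ≤ maxBirkhoffSum T f N ω := by
  refine le_trans ?_ (maxBirkhoffSum_mono T f ω h)
  cases n with
  | zero => simp [maxBirkhoffSum]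
  | succ n => exact le_max_right _ _

lemma maxBirkhoffSum_nonneg (N : ℕ) (ω : Ω) : 0 ≤ maxBirkhoffSum T f N ω := by
  simpa using birkhoffSum_le_maxBirkhoffSum (T := T) (f := f) (Nat.zero_le N) ω

lemma maxBirkhoffSum_le_max_zero_add_comp (N : ℕ) (ω : Ω) :
    maxBirkhoffSum T f N ω ≤ max 0 (f ω + maxBirkhoffSum T f N (T ω)) := by
  induction N with
  | zero => exact le_max_left _ _
  | succ N ih =>
    refine max_le (ih.trans (max_le_max le_rfl ?_)) (le_max_of_le_right ?_)
    · exact add_le_add_right (maxBirkhoffSum_mono T f (T ω) N.le_succ) _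
    · rw [birkhoffSum_succ']
      exact add_le_add_right (birkhoffSum_le_maxBirkhoffSum N.le_succ (T ω)) _

variable [MeasurableSpace Ω] {μ : Measure Ω}

lemma Measurable.birkhoffSum (hf : Measurable f) (hT : Measurable T) (n : ℕ) :
    Measurable (birkhoffSum T f n) :=
  Finset.measurable_sum _ fun k _ ↦ hf.comp (hT.iterate k)

lemma Measurable.birkhoffAverage (hf : Measurable f) (hT : Measurable T) (n : ℕ) :
    Measurable (birkhoffAverage ℝ T f n) :=
  (hf.birkhoffSum hT n).const_smul ((n : ℝ)⁻¹)

lemma MeasureTheory.Integrable.birkhoffSum (hf : Integrable f μ) (hT : MeasurePreserving T μ μ)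
    (n : ℕ) : Integrable (birkhoffSum T f n) μ :=
  integrable_finsetSum _ fun k _ ↦ (hT.iterate k).integrable_comp_of_integrable hf

lemma Measurable.maxBirkhoffSum (hf : Measurable f) (hT : Measurable T) (N : ℕ) :
    Measurable (maxBirkhoffSum T f N) := by
  induction N with
  | zero => exact measurable_const
  | succ N ih => exact ih.max (hf.birkhoffSum hT (N + 1))

lemma MeasureTheory.Integrable.maxBirkhoffSum (hf : Integrable f μ) (hT : MeasurePreserving T μ μ)
    (N : ℕ) : Integrable (maxBirkhoffSum T f N) μ := by
  induction N with
  | zero => exact integrable_zero _ _ μ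
  | succ N ih => exact ih.sup (hf.birkhoffSum hT (N + 1))

/-- The maximal ergodic lemma: on `{M > 0}`, where `M = maxBirkhoffSum T f N`, one has
`M ≤ f + M ∘ T`, and `M` vanishes off this set while `M ∘ T` has the same integral as `M`. -/
theorem MeasureTheory.MeasurePreserving.setIntegral_maxBirkhoffSum_pos_nonneg
    (hT : MeasurePreserving T μ μ) (hf : Measurable f) (hfi : Integrable f μ) (N : ℕ) :
    0 ≤ ∫ ω in {ω | 0 < maxBirkhoffSum T f N ω}, f ω ∂μ := by
  set M := maxBirkhoffSum T f N
  set E := {ω | 0 < M ω}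
  have hMi : Integrable M μ := hfi.maxBirkhoffSum hT N
  have hMTi : Integrable (M ∘ T) μ := hT.integrable_comp_of_integrable hMi
  have hE : MeasurableSet E := measurableSet_lt measurable_const (hf.maxBirkhoffSum hT.measurable N)
  have hM_on : ∫ ω in E, M ω ∂μ = ∫ ω, M ω ∂μ :=
    setIntegral_eq_integral_of_forall_compl_eq_zero fun ω hω ↦
      le_antisymm (not_lt.mp hω) (maxBirkhoffSum_nonneg N ω)
  have hMT_on : ∫ ω in E, M (T ω) ∂μ ≤ ∫ ω, M (T ω) ∂μ :=
    setIntegral_le_integral hMTi (ae_of_all _ fun ω ↦ maxBirkhoffSum_nonneg N (T ω))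
  have hMT : ∫ ω, M (T ω) ∂μ = ∫ ω, M ω ∂μ := by
    rw [← integral_map hT.measurable.aemeasurable
      (hf.maxBirkhoffSum hT.measurable N).aestronglyMeasurable, hT.map_eq]
  have hstep : ∀ ω ∈ E, M ω - M (T ω) ≤ f ω := fun ω hω ↦ by
    have := maxBirkhoffSum_le_max_zero_add_comp (T := T) (f := f) N ω
    rcases le_max_iff.mp this with h | h
    · exact absurd hω (not_lt.mpr h)
    · linarith
  calc 0 ≤ ∫ ω in E, M ω ∂μ - ∫ ω in E, M (T ω) ∂μ := by linarith
    _ = ∫ ω in E, (M ω - M (T ω)) ∂μ := (integral_sub hMi.integrableOn hMTi.integrableOn).symm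
    _ ≤ ∫ ω in E, f ω ∂μ :=
      setIntegral_mono_on (hMi.integrableOn.sub hMTi.integrableOn) hfi.integrableOn hE hstep

theorem MeasureTheory.MeasurePreserving.integral_nonneg_of_ae_exists_birkhoffSum_pos
    (hT : MeasurePreserving T μ μ) (hf : Measurable f) (hfi : Integrable f μ)
    (h : ∀ᵐ ω ∂μ, ∃ n, 0 < birkhoffSum T f n ω) : 0 ≤ ∫ ω, f ω ∂μ := by
  set E : ℕ → Set Ω := fun N ↦ {ω | 0 < maxBirkhoffSum T f N ω}
  have hE : ∀ N, MeasurableSet (E N) := fun N ↦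
    measurableSet_lt measurable_const (hf.maxBirkhoffSum hT.measurable N)
  have hE_mono : Monotone E := fun N N' h ω hω ↦ hω.trans_le (maxBirkhoffSum_mono T f ω h)
  have hE_ae : (⋃ N, E N) =ᵐ[μ] univ := eventuallyEq_univ.2 <| by
    filter_upwards [h] with ω ⟨n, hn⟩
    exact mem_iUnion.2 ⟨n, hn.trans_le (birkhoffSum_le_maxBirkhoffSum le_rfl ω)⟩
  have hlim := tendsto_setIntegral_of_monotone hE hE_mono hfi.integrableOn
  rw [setIntegral_congr_set hE_ae, setIntegral_univ] at hlim
  exact ge_of_tendsto' hlim fun N ↦ hT.setIntegral_maxBirkhoffSum_pos_nonneg hf hfi N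

end MaximalErgodic

section Birkhoff

variable {Ω : Type*} [MeasurableSpace Ω] {μ : Measure Ω} [IsProbabilityMeasure μ]
  {T : Ω → Ω} {f : Ω → ℝ}

lemma MeasureTheory.MeasurePreserving.le_integral_of_ae_frequently_lt_birkhoffAverage
    (hT : MeasurePreserving T μ μ) (hf : Measurable f) (hfi : Integrable f μ) {t : ℝ}
    (h : ∀ᵐ ω ∂μ, ∃ᶠ n in atTop, t < birkhoffAverage ℝ T f n ω) : t ≤ ∫ ω, f ω ∂μ := by
  have hsum : ∀ n ω, birkhoffSum T (fun ω ↦ f ω - t) n ω = birkhoffSum T f n ω - n * t :=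
    fun n ω ↦ by simp [birkhoffSum, Finset.sum_sub_distrib]
  have := hT.integral_nonneg_of_ae_exists_birkhoffSum_pos (hf.sub_const t)
    (hfi.sub (integrable_const t)) <| by
      filter_upwards [h] with ω hω
      obtain ⟨n, hn, hlt⟩ := (frequently_atTop.mp hω) 1
      have hn' : (0 : ℝ) < n := Nat.cast_pos.2 hn
      refine ⟨n, ?_⟩
      rw [hsum, sub_pos, ← lt_inv_mul_iff₀ hn']
      simpa [birkhoffAverage] using hlt
  simpa [integral_sub hfi (integrable_const t)] using this

lemma MeasureTheory.MeasurePreserving.integral_le_of_ae_frequently_birkhoffAverage_lt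
    (hT : MeasurePreserving T μ μ) (hf : Measurable f) (hfi : Integrable f μ) {t : ℝ}
    (h : ∀ᵐ ω ∂μ, ∃ᶠ n in atTop, birkhoffAverage ℝ T f n ω < t) : ∫ ω, f ω ∂μ ≤ t := by
  have := hT.le_integral_of_ae_frequently_lt_birkhoffAverage hf.neg hfi.neg (t := -t) <| by
    simpa [birkhoffAverage_neg] using h
  simpa [integral_neg] using this

theorem Ergodic.ae_tendsto_birkhoffAverage (hT : Ergodic T μ) (hf : Measurable f) {C : ℝ}
    (hC : ∀ ω, |f ω| ≤ C) :
    ∀ᵐ ω ∂μ, Tendsto (birkhoffAverage ℝ T f · ω) atTop (𝓝 (∫ ω, f ω ∂μ)) := by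
  have hfi : Integrable f μ :=
    .of_bound hf.aestronglyMeasurable C (ae_of_all _ fun ω ↦ (Real.norm_eq_abs _).trans_le (hC ω))
  have hu (ω : Ω) := isBoundedUnder_le_birkhoffAverage (T := T) hC ω
  have hl (ω : Ω) := isBoundedUnder_ge_birkhoffAverage (T := T) hC ω
  set φ := fun ω ↦ limsup (birkhoffAverage ℝ T f · ω) atTop
  set ψ := fun ω ↦ liminf (birkhoffAverage ℝ T f · ω) atTop
  have hφm : Measurable φ := .limsup fun n ↦ hf.birkhoffAverage hT.measurable n
  have hψm : Measurable ψ := .liminf fun n ↦ hf.birkhoffAverage hT.measurable n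
  obtain ⟨c, hc⟩ := hT.ae_eq_const_of_ae_eq_comp_ae hφm.aestronglyMeasurable <|
    ae_of_all _ (limsup_birkhoffAverage_apply hC)
  obtain ⟨c', hc'⟩ := hT.ae_eq_const_of_ae_eq_comp_ae hψm.aestronglyMeasurable <|
    ae_of_all _ (liminf_birkhoffAverage_apply hC)
  have hc_le : c ≤ ∫ ω, f ω ∂μ := forall_lt_imp_le_iff_le_of_dense.mp fun t ht ↦
    hT.toMeasurePreserving.le_integral_of_ae_frequently_lt_birkhoffAverage hf hfi <| by
      filter_upwards [hc] with ω (hω : φ ω = c)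
      exact frequently_lt_of_lt_limsup (hl ω).isCoboundedUnder_le (ht.trans_eq hω.symm)
  have hle_c' : ∫ ω, f ω ∂μ ≤ c' := forall_gt_imp_ge_iff_le_of_dense.mp fun t ht ↦
    hT.toMeasurePreserving.integral_le_of_ae_frequently_birkhoffAverage_lt hf hfi <| by
      filter_upwards [hc'] with ω (hω : ψ ω = c')
      exact frequently_lt_of_liminf_lt (hu ω).isCoboundedUnder_ge (hω.trans_lt ht)
  filter_upwards [hc, hc'] with ω (hφ : φ ω = c) (hψ : ψ ω = c')
  have hc'_le : c' ≤ c := hφ ▸ hψ ▸ liminf_le_limsup (hu ω) (hl ω)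
  exact tendsto_of_liminf_eq_limsup (hψ.trans (by linarith)) (hφ.trans (by linarith)) (hu ω) (hl ω)

end Birkhoff

lemma tendsto_of_monotone_of_continuousAt {N : ℝ → ℕ → ℝ} (hN : ∀ d, Monotone (N · d))
    {G : ℝ → ℝ} {D : Set ℝ} (hD : Dense D) (h : ∀ q ∈ D, Tendsto (N q) atTop (𝓝 (G q)))
    {x : ℝ} (hG : ContinuousAt G x) : Tendsto (N x) atTop (𝓝 (G x)) := by
  refine tendsto_order.2 ⟨fun a ha ↦ ?_, fun b hb ↦ ?_⟩
  · obtain ⟨l, hlx, hl⟩ := mem_nhdsLT_iff_exists_Ioo_subset.1 <|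
      nhdsWithin_le_nhds (hG.eventually (eventually_gt_nhds ha))
    obtain ⟨q, hqD, hq⟩ := hD.exists_between hlx
    filter_upwards [(h q hqD).eventually (eventually_gt_nhds (hl hq))] with d hd
    exact hd.trans_le (hN d hq.2.le)
  · obtain ⟨r, hxr, hr⟩ := mem_nhdsGT_iff_exists_Ioo_subset.1 <|
      nhdsWithin_le_nhds (hG.eventually (eventually_lt_nhds hb))
    obtain ⟨q, hqD, hq⟩ := hD.exists_between hxr
    filter_upwards [(h q hqD).eventually (eventually_lt_nhds (hr hq))] with d hd
    exact (hN d hq.1.le).trans_lt hd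

lemma birkhoffSum_indicator_one {Ω : Type*} (T : Ω → Ω) (p : Ω → Prop) [DecidablePred p] (n : ℕ)
    (ω : Ω) :
    birkhoffSum T ({ω | p ω}.indicator (1 : Ω → ℝ)) n ω =
      ((Finset.range n).filter (fun k ↦ p (T^[k] ω))).card := by
  simp [birkhoffSum, Set.indicator_apply, Finset.sum_boole]

lemma monotone_birkhoffAverage_indicator_le {Ω : Type*} (T : Ω → Ω) (X : Ω → ℝ) (d : ℕ)
    (ω : Ω) : Monotone fun q ↦ birkhoffAverage ℝ T ({ω | X ω ≤ q}.indicator (1 : Ω → ℝ)) d ω := by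
  intro q q' hqq'
  simp only [birkhoffAverage, birkhoffSum, smul_eq_mul]
  gcongr
  exact zero_le_one

lemma card_filter_range_eq_card_filter_Ico_add_one {p : ℕ → Prop} [DecidablePred p] (h0 : p 0)
    {d : ℕ} (hd : 1 ≤ d) :
    ((Finset.range d).filter p).card = ((Finset.Ico 1 d).filter p).card + 1 := by
  rw [Finset.range_eq_Ico, ← Finset.insert_Ico_add_one_left_eq_Ico hd, Finset.filter_insert,
    if_pos h0, Finset.card_insert_of_notMem (by simp), zero_add]

lemma card_filter_Ico_div_eq_birkhoffAverage_sub {Ω : Type*} (T : Ω → Ω) (X : Ω → ℝ) {d : ℕ}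
    (hd : 1 ≤ d) (ω : Ω) :
    (((Finset.Ico 1 d).filter (fun r ↦ X (T^[r] ω) ≤ X ω)).card : ℝ) / d =
      birkhoffAverage ℝ T ({y | X y ≤ X ω}.indicator 1) d ω - 1 / d := by
  rw [birkhoffAverage, smul_eq_mul, birkhoffSum_indicator_one T (X · ≤ X ω),
    card_filter_range_eq_card_filter_Ico_add_one (p := fun k ↦ X (T^[k] ω) ≤ X ω) le_rfl hd]
  push_cast
  ring

/-- If `T` is ergodic and measure preserving and `X : Ω → ℝ` is
measurable with cdf `F`, and `I_d ω = #{1 ≤ r ≤ d-1 : X(T^r ω) ≤ X ω}`, then for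
`μ`-a.e. `ω` the limit `lim_{d→∞} I_d(ω)/d` exists and equals `F(X ω)`. -/
theorem stmt4 {Ω : Type*} [MeasurableSpace Ω] (μ : Measure Ω) [IsProbabilityMeasure μ]
    (T : Ω → Ω) (hT : Ergodic T μ)
    (X : Ω → ℝ) (hX : Measurable X)
    (F : ℝ → ℝ) (hF : ∀ q, F q = (μ {ω | X ω ≤ q}).toReal)
    (I : ℕ → Ω → ℕ)
    (hI : ∀ d ω, I d ω = ((Finset.Ico 1 d).filter (fun r => X (T^[r] ω) ≤ X ω)).card) :
    ∀ᵐ ω ∂μ, Tendsto (fun d : ℕ => (I d ω : ℝ) / d) atTop (nhds (F (X ω))) := by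
  set p : ℝ → ℕ → Ω → ℝ := fun q ↦ birkhoffAverage ℝ T ({ω | X ω ≤ q}.indicator 1)
  have hF_mono : Monotone F := fun q q' hqq' ↦ by
    simp only [hF]
    exact ENNReal.toReal_mono (measure_ne_top μ _) (measure_mono fun ω hω ↦ le_trans hω hqq')
  set D := range ((↑) : ℚ → ℝ) ∪ {x | ¬ContinuousAt F x}
  have hD : D.Countable := (countable_range _).union hF_mono.countable_not_continuousAt
  have hbirkhoff : ∀ᵐ ω ∂μ, ∀ q ∈ D, Tendsto (p q · ω) atTop (𝓝 (F q)) := by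
    refine (ae_ball_iff hD).2 fun q _ ↦ ?_
    have hs : MeasurableSet {ω | X ω ≤ q} := measurableSet_le hX measurable_const
    simpa [hF, integral_indicator_one hs, measureReal_def] using
      hT.ae_tendsto_birkhoffAverage (measurable_one.indicator hs) (C := 1)
        fun ω ↦ by by_cases h : X ω ≤ q <;> simp [h]
  filter_upwards [hbirkhoff] with ω hω
  have hlim : Tendsto (p (X ω) · ω) atTop (𝓝 (F (X ω))) := by
    by_cases hc : ContinuousAt F (X ω)
    · exact tendsto_of_monotone_of_continuousAt
        (monotone_birkhoffAverage_indicator_le T X · ω) Rat.denseRange_cast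
        (fun q hq ↦ hω q (.inl hq)) hc
    · exact hω _ (.inr hc)
  have hlim' := hlim.sub tendsto_one_div_atTop_nhds_zero_nat
  rw [sub_zero] at hlim'
  refine hlim'.congr' ?_
  filter_upwards [eventually_ge_atTop 1] with d hd
  rw [hI, card_filter_Ico_div_eq_birkhoffAverage_sub T X hd]
end

section
/- Let T be an ergodic measure-preserving transformation on a probability space (Ω, 𝔉, μ) and X : Ω → ℝⁿ a measurable map. Then σ(X) is contained, modulo μ-null sets, in the ordinal σ-algebra generated by all ordinal partitions 𝒫_d(X, T), d ≥ 1. -/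
/-!
Fix a coordinate `f = X · i` with law `ν`. Since `{f ∘ T^[k] < f}` is a union of ordinal cells,
the empirical rank `N⁻¹ · #{k < N | f (T^[k] ω) < f ω}` is ordinal-measurable. The mean ergodic
theorem, applied to the countably many indicators of `{f < y}` with `y` rational or an atom of `ν`,
gives a subsequence along which their Birkhoff averages converge a.e.; squeezing the rank between
them shows that it tends to `ν (Iio (f ω))`. So `ν (Iio (f ·))` is ordinal-measurable up to null
sets, hence so is `f`: the set `{f ≤ t}` differs from `{ν (Iio (f ·)) < ν (Iic t)}` by a null set.
-/

open MeasureTheory Set MeasurableSpace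

/-- The element of the ordinal partition `𝒫_d(X,T)` corresponding to the
permutation `π = (i₀,…,i_d)` of `{0,…,d}`: the set of `ω` with
`X(T^{i₀}ω) ≥ X(T^{i₁}ω) ≥ … ≥ X(T^{i_d}ω)`, ties broken by requiring
`i_τ > i_{τ+1}` in case of equality. -/
def ordCell {Ω : Type*} (X : Ω → ℝ) (T : Ω → Ω) (d : ℕ)
    (π : Equiv.Perm (Fin (d + 1))) : Set Ω :=
  {ω | ∀ τ : Fin d,
    X (T^[(π τ.castSucc : ℕ)] ω) > X (T^[(π τ.succ : ℕ)] ω) ∨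
    (X (T^[(π τ.castSucc : ℕ)] ω) = X (T^[(π τ.succ : ℕ)] ω) ∧
      (π τ.succ : ℕ) < (π τ.castSucc : ℕ))}

/-- The ordinal σ-algebra `σ(𝒫(X,T))` generated by all ordinal partitions
`𝒫_d(X,T) = ⋁_{i} 𝒫_d(X_i,T)`, `d ≥ 1`. -/
def ordAlg {Ω : Type*} {n : ℕ} (X : Ω → Fin n → ℝ) (T : Ω → Ω) : MeasurableSpace Ω :=
  MeasurableSpace.generateFrom
    {s | ∃ d : ℕ, 1 ≤ d ∧ ∃ i : Fin n, ∃ π : Equiv.Perm (Fin (d + 1)),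
      s = ordCell (fun ω => X ω i) T d π}

open Filter Topology
open scoped ENNReal

section OrdinalPattern

variable {Ω : Type*} (X : Ω → ℝ) (T : Ω → Ω) {d : ℕ}

theorem mem_ordCell_iff_strictAnti {π : Equiv.Perm (Fin (d + 1))} {ω : Ω} :
    ω ∈ ordCell X T d π ↔ StrictAnti fun j => toLex (X (T^[π j] ω), π j) := by
  simp only [Fin.strictAnti_iff_succ_lt, Prod.Lex.toLex_lt_toLex, ordCell, mem_ofPred_eq]
  refine forall_congr' fun τ => or_congr Iff.rfl (and_congr eq_comm Iff.rfl)

theorem exists_mem_ordCell (ω : Ω) : ∃ π : Equiv.Perm (Fin (d + 1)), ω ∈ ordCell X T d π := by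
  set key : Fin (d + 1) → ℝ ×ₗ Fin (d + 1) := fun j => toLex (X (T^[j] ω), j)
  have hkey : Function.Injective key := fun a b h => congrArg Prod.snd (toLex.injective h)
  refine ⟨Tuple.sort key * Fin.revPerm, (mem_ordCell_iff_strictAnti X T).2 ?_⟩
  exact ((Tuple.monotone_sort key).strictMono_of_injective
    (hkey.comp (Tuple.sort key).injective)).comp_strictAnti Fin.rev_strictAnti

theorem setOf_iterate_lt_eq_biUnion_ordCell (k : ℕ) :
    {ω | X (T^[k] ω) < X ω} =
      ⋃ π ∈ {π : Equiv.Perm (Fin (k + 1)) | π.symm 0 < π.symm (Fin.last k)},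
        ordCell X T k π := by
  ext ω
  obtain ⟨π, hπ⟩ := exists_mem_ordCell X T (d := k) ω
  have h_cell (π : Equiv.Perm (Fin (k + 1))) (hπ : ω ∈ ordCell X T k π) :
      X (T^[k] ω) < X ω ↔ π.symm 0 < π.symm (Fin.last k) := by
    rw [← ((mem_ordCell_iff_strictAnti X T).1 hπ).lt_iff_gt]
    simp [Prod.Lex.toLex_lt_toLex]
  simp only [mem_ofPred_eq, mem_iUnion, exists_prop]
  exact ⟨fun h => ⟨π, (h_cell π hπ).1 h, hπ⟩, fun ⟨π', h, hπ'⟩ => (h_cell π' hπ').2 h⟩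

end OrdinalPattern

theorem measurableSet_ordAlg_iterate_lt {Ω : Type*} {n : ℕ} (X : Ω → Fin n → ℝ) (T : Ω → Ω)
    (i : Fin n) (k : ℕ) : MeasurableSet[ordAlg X T] {ω | X (T^[k] ω) i < X ω i} := by
  rcases Nat.eq_zero_or_pos k with rfl | hk
  · simp
  rw [setOf_iterate_lt_eq_biUnion_ordCell (fun ω => X ω i)]
  exact .biUnion (to_countable _) fun π _ => measurableSet_generateFrom ⟨k, hk, i, π, rfl⟩

theorem measurable_ordAlg_birkhoffAverage_indicator_preimage_Iio {Ω : Type*} {n : ℕ}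
    (X : Ω → Fin n → ℝ) (T : Ω → Ω) (i : Fin n) (N : ℕ) : Measurable[ordAlg X T] fun ω =>
      birkhoffAverage ℝ T (((X · i) ⁻¹' Iio (X ω i)).indicator (1 : Ω → ℝ)) N ω := by
  change Measurable[ordAlg X T] fun ω =>
    (N : ℝ)⁻¹ • ∑ k ∈ Finset.range N, {ω | X (T^[k] ω) i < X ω i}.indicator (1 : Ω → ℝ) ω
  refine .fun_const_smul (Finset.measurable_sum _ fun k _ => ?_) _
  exact measurable_const.indicator (measurableSet_ordAlg_iterate_lt X T i k)

namespace MeasureTheory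

variable {Ω : Type*} {m m₀ : MeasurableSpace Ω} {μ : Measure[m₀] Ω}

def aeEqClosure (m : MeasurableSpace Ω) (μ : Measure[m₀] Ω) : MeasurableSpace Ω where
  MeasurableSet' s := ∃ t, MeasurableSet[m] t ∧ s =ᵐ[μ] t
  measurableSet_empty := ⟨∅, .empty, .rfl⟩
  measurableSet_compl := fun _ ⟨t, ht, hst⟩ => ⟨tᶜ, ht.compl, hst.compl⟩
  measurableSet_iUnion := fun _ hs => by
    choose t ht hst using hs
    exact ⟨⋃ k, t k, .iUnion ht, Filter.EventuallyEq.countable_iUnion hst⟩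

theorem le_aeEqClosure : m ≤ aeEqClosure m μ := fun s hs => ⟨s, hs, .rfl⟩

theorem measurableSet_aeEqClosure_of_ae_eq {s t : Set Ω} (hs : MeasurableSet[aeEqClosure m μ] s)
    (hst : s =ᵐ[μ] t) : MeasurableSet[aeEqClosure m μ] t :=
  let ⟨u, hu, hsu⟩ := hs
  ⟨u, hu, hst.symm.trans hsu⟩

theorem measurable_aeEqClosure_of_ae_eq {β : Type*} [MeasurableSpace β] {f g : Ω → β}
    (hg : Measurable[m] g) (hfg : f =ᵐ[μ] g) : Measurable[aeEqClosure m μ] f := fun _ hB =>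
  measurableSet_aeEqClosure_of_ae_eq (le_aeEqClosure _ (hg hB)) (hfg.fun_comp (· ∈ _)).symm

end MeasureTheory

theorem birkhoffAverage_mono {α : Type*} (T : α → α) {g g' : α → ℝ} (h : g ≤ g') (N : ℕ) :
    birkhoffAverage ℝ T g N ≤ birkhoffAverage ℝ T g' N := fun x =>
  smul_le_smul_of_nonneg_left (Finset.sum_le_sum fun k _ => h _) (by positivity)

namespace MeasureTheory

section Ergodic

variable {Ω : Type*} [MeasurableSpace Ω] {μ : Measure Ω} {T : Ω → Ω}

theorem Lp.coeFn_birkhoffAverage_compMeasurePreserving {E : Type*} [NormedAddCommGroup E]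
    [NormedSpace ℝ E] {p : ℝ≥0∞} [Fact (1 ≤ p)] (hT : MeasurePreserving T μ μ) (x : Lp E p μ)
    (N : ℕ) : ⇑(birkhoffAverage ℝ (Lp.compMeasurePreserving T hT) id N x : Lp E p μ) =ᵐ[μ]
      birkhoffAverage ℝ T x N := by
  have h_iter : ∀ᵐ ω ∂μ, ∀ k, (Lp.compMeasurePreserving T hT)^[k] x ω = x (T^[k] ω) := by
    refine ae_all_iff.2 fun k => ?_
    rw [Lp.compMeasurePreserving_iterate]
    exact Lp.coeFn_compMeasurePreserving x (hT.iterate k)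
  filter_upwards [Lp.coeFn_smul (N : ℝ)⁻¹ (birkhoffSum (Lp.compMeasurePreserving T hT) id N x),
    Lp.coeFn_finsetSum (Finset.range N) fun k => (Lp.compMeasurePreserving T hT)^[k] x, h_iter]
    with ω h_smul h_sum h_iter
  simp only [birkhoffAverage, birkhoffSum, id_eq] at h_smul ⊢
  rw [h_smul, Pi.smul_apply, h_sum, Finset.sum_apply]
  simp only [h_iter]

variable [IsProbabilityMeasure μ]

theorem Ergodic.tendsto_birkhoffAverage_Lp (hT : Ergodic T μ) (x : Lp ℝ 2 μ) :
    Tendsto (birkhoffAverage ℝ (Lp.compMeasurePreserving (E := ℝ) (p := 2) T hT.1) id · x)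
      atTop (𝓝 (Lp.const 2 μ (∫ ω, x ω ∂μ))) := by
  let U := (Lp.compMeasurePreservingₗᵢ (E := ℝ) (p := 2) ℝ T hT.1).toContinuousLinearMap
  -- By ergodicity the projection of `x` onto the fixed points of `U` is a constant `c`, and
  -- pairing with the fixed vector `1` shows `c = ∫ x`.
  have inner_const_one (y : Lp ℝ 2 μ) : inner ℝ (Lp.const 2 μ (1 : ℝ)) y = ∫ ω, y ω ∂μ := by
    rw [← indicatorConstLp_univ, L2.inner_indicatorConstLp_one, Measure.restrict_univ]
  have const_mem (c : ℝ) : Lp.const 2 μ c ∈ U.eqLocus (1 : Lp ℝ 2 μ →L[ℝ] Lp ℝ 2 μ) :=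
    Lp.toLp_compMeasurePreserving (memLp_const c) hT.1
  have mem_eq_const (y) (hy : y ∈ U.eqLocus (1 : Lp ℝ 2 μ →L[ℝ] Lp ℝ 2 μ)) :
      ∃ c, y = Lp.const 2 μ c := by
    obtain ⟨c, hc⟩ := hT.eq_const_of_compMeasurePreserving_eq (congrArg Subtype.val hy)
    exact ⟨c, Subtype.ext hc⟩
  obtain ⟨c, hc⟩ :=
    mem_eq_const _ ((U.eqLocus (1 : Lp ℝ 2 μ →L[ℝ] Lp ℝ 2 μ)).orthogonalProjectionOnto x).2
  have hc_eq : c = ∫ ω, x ω ∂μ := by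
    have := Submodule.inner_orthogonalProjectionOnto_eq_of_mem_left ⟨_, const_mem 1⟩ x
    rw [Submodule.coe_inner, hc, inner_const_one, inner_const_one] at this
    simpa [integral_congr_ae (Lp.coeFn_const 2 μ c)] using this
  have hlim := U.tendsto_birkhoffAverage_orthogonalProjection
    (LinearIsometry.norm_toContinuousLinearMap_le _) x
  rwa [hc, hc_eq] at hlim

theorem Ergodic.tendstoInMeasure_birkhoffAverage (hT : Ergodic T μ) {g : Ω → ℝ}
    (hg : MemLp g 2 μ) :
    TendstoInMeasure μ (birkhoffAverage ℝ T g) atTop fun _ => ∫ ω, g ω ∂μ := by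
  refine (tendstoInMeasure_of_tendsto_Lp (hT.tendsto_birkhoffAverage_Lp (hg.toLp g))).congr
    (fun N => ?_) ?_
  · exact (Lp.coeFn_birkhoffAverage_compMeasurePreserving hT.1 _ N).trans
      (hT.1.quasiMeasurePreserving.birkhoffAverage_ae_eq_of_ae_eq ℝ hg.coeFn_toLp N)
  · rw [integral_congr_ae hg.coeFn_toLp]
    exact Lp.coeFn_const 2 μ _

end Ergodic

theorem exists_strictMono_ae_tendsto_of_tendstoInMeasure {Ω : Type*} [MeasurableSpace Ω]
    {μ : Measure Ω} {ι E : Type*} [Countable ι] [PseudoEMetricSpace E]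
    {u : ι → ℕ → Ω → E} {v : ι → Ω → E}
    (h : ∀ j, TendstoInMeasure μ (u j) atTop (v j)) :
    ∃ φ : ℕ → ℕ, StrictMono φ ∧ ∀ᵐ ω ∂μ, ∀ j, Tendsto (fun m => u j (φ m) ω) atTop (𝓝 (v j ω)) := by
  obtain ⟨enc, henc⟩ := Countable.exists_injective_nat ι
  -- Along `φ`, the `m`-th deviation set of every `j` with `enc j ≤ m` has measure `≤ 2⁻ᵐ`;
  -- Borel–Cantelli then gives a.e. convergence for each `j`.
  have h_small (m : ℕ) : ∀ᶠ N in atTop, ∀ j, enc j ≤ m →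
      μ {ω | 2⁻¹ ^ m ≤ edist (u j N ω) (v j ω)} ≤ 2⁻¹ ^ m := by
    have h_fin : {j | enc j ≤ m}.Finite := (finite_Iic m).preimage henc.injOn
    refine (h_fin.eventually_all.2 fun j _ => ?_).mono fun N hN j hj => hN j hj
    have hpos : (0 : ℝ≥0∞) < 2⁻¹ ^ m := ENNReal.pow_pos (by simp) m
    exact ((h j _ hpos).eventually (gt_mem_nhds hpos)).mono fun N hN => hN.le
  obtain ⟨φ, hφ, hφ_small⟩ := extraction_forall_of_eventually h_small
  refine ⟨φ, hφ, ae_all_iff.2 fun j => ?_⟩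
  have h_le (m : ℕ) : μ {ω | 2⁻¹ ^ m ≤ edist (u j (φ (m + enc j)) ω) (v j ω)} ≤ 2⁻¹ ^ m :=
    have h_two : (2⁻¹ : ℝ≥0∞) ^ (m + enc j) ≤ 2⁻¹ ^ m :=
      pow_le_pow_right_of_le_one' (by norm_num) (Nat.le_add_right m (enc j))
    calc _ ≤ μ {ω | 2⁻¹ ^ (m + enc j) ≤ edist (u j (φ (m + enc j)) ω) (v j ω)} :=
          measure_mono fun ω hω => h_two.trans hω
      _ ≤ 2⁻¹ ^ m := (hφ_small _ j (Nat.le_add_left _ _)).trans h_two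
  have h_summable : ∑' m, μ {ω | 2⁻¹ ^ m ≤ edist (u j (φ (m + enc j)) ω) (v j ω)} ≠ ∞ :=
    ne_top_of_le_ne_top (by simp [ENNReal.tsum_geometric, ENNReal.one_sub_inv_two])
      (ENNReal.tsum_le_tsum h_le)
  filter_upwards [ae_eventually_notMem h_summable] with ω hω
  rw [← tendsto_add_atTop_iff_nat (enc j), tendsto_iff_edist_tendsto_0]
  refine tendsto_of_tendsto_of_tendsto_of_le_of_le' tendsto_const_nhds
    (ENNReal.tendsto_pow_atTop_nhds_zero_of_lt_one (by norm_num : (2⁻¹ : ℝ≥0∞) < 1))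
    (Eventually.of_forall fun _ => zero_le) ?_
  exact hω.mono fun m hm => (not_le.1 hm).le

theorem measure_eq_zero_of_forall_measure_inter_Ici_eq_zero {α : Type*} [LinearOrder α]
    [TopologicalSpace α] [OrderTopology α] [SecondCountableTopology α] [MeasurableSpace α]
    (ν : Measure α) {s : Set α} (h : ∀ x ∈ s, ν (s ∩ Ici x) = 0) : ν s = 0 := by
  refine measure_null_of_locally_null s fun x hx => ?_
  by_cases h_min : ∃ y ∈ s, y < x
  · obtain ⟨y, hy, hyx⟩ := h_min
    exact ⟨s ∩ Ioi y, inter_mem_nhdsWithin s (Ioi_mem_nhds hyx),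
      measure_mono_null (inter_subset_inter_right s Ioi_subset_Ici_self) (h y hy)⟩
  · push Not at h_min
    have hs : s ∩ Ici x = s := inter_eq_left.2 fun y hy => h_min y hy
    exact ⟨s, self_mem_nhdsWithin, hs ▸ h x hx⟩

section Real

variable (ν : Measure ℝ)

theorem Iic_ae_eq_setOf_measure_Iio_lt [IsFiniteMeasure ν] (t : ℝ) :
    Iic t =ᵐ[ν] {x | ν (Iio x) < ν (Iic t)} := by
  have h_sub : {x | ν (Iio x) < ν (Iic t)} ⊆ Iic t := fun x hx =>
    not_lt.1 fun htx => hx.not_ge (measure_mono (Iic_subset_Iio.2 htx))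
  have h_Icc {x : ℝ} (hxt : x ≤ t) (hx : ν (Iic t) ≤ ν (Iio x)) : ν (Icc x t) = 0 := by
    have h_disj : Disjoint (Iio x) (Icc x t) :=
      (Iio_disjoint_Ici le_rfl).mono_right Icc_subset_Ici_self
    rw [← Iio_union_Icc_eq_Iic hxt, measure_union h_disj measurableSet_Icc] at hx
    exact nonpos_iff_eq_zero.1
      (ENNReal.le_of_add_le_add_left (measure_ne_top ν (Iio x)) (by rwa [add_zero]))
  have h_null : ν {x | x ≤ t ∧ ν (Iic t) ≤ ν (Iio x)} = 0 :=
    measure_eq_zero_of_forall_measure_inter_Ici_eq_zero ν fun x hx =>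
      measure_mono_null (fun y hy => (⟨hy.2, hy.1.1⟩ : y ∈ Icc x t)) (h_Icc hx.1 hx.2)
  rw [ae_eq_set, sdiff_eq_empty.2 h_sub, measure_empty]
  exact ⟨measure_mono_null (fun x hx => (⟨hx.1, not_lt.1 hx.2⟩ : x ≤ t ∧ _)) h_null, rfl⟩

theorem exists_rat_lt_and_lt_measure_Iio {a : ℝ≥0∞} {x : ℝ} (h : a < ν (Iio x)) :
    ∃ q : ℚ, (q : ℝ) < x ∧ a < ν (Iio q) := by
  have h_union : Iio x = ⋃ q : {q : ℚ // (q : ℝ) < x}, Iio (q : ℝ) := by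
    ext y
    simp only [mem_Iio, mem_iUnion, Subtype.exists, exists_prop]
    exact ⟨fun hy => (exists_rat_btwn hy).imp fun q hq => ⟨hq.2, hq.1⟩,
      fun ⟨q, hqx, hyq⟩ => hyq.trans hqx⟩
  have h_mono : Monotone fun q : {q : ℚ // (q : ℝ) < x} => Iio (q : ℝ) :=
    fun q r hqr => Iio_subset_Iio (Rat.cast_le.2 hqr)
  rw [h_union, h_mono.directed_le.measure_iUnion, lt_iSup_iff] at h
  obtain ⟨⟨q, hqx⟩, hq⟩ := h
  exact ⟨q, hqx, hq⟩

theorem exists_rat_gt_and_measure_Iio_lt [IsFiniteMeasure ν] {b : ℝ≥0∞} {x : ℝ}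
    (h : ν (Iic x) < b) : ∃ q : ℚ, x < q ∧ ν (Iio q) < b := by
  have h_inter : Iic x = ⋂ q : {q : ℚ // x < q}, Iio (q : ℝ) := by
    ext y
    simp only [mem_Iic, mem_iInter, mem_Iio, Subtype.forall]
    exact ⟨fun hy q hxq => hy.trans_lt hxq, fun hy => not_lt.1 fun hxy =>
      let ⟨q, hxq, hqy⟩ := exists_rat_btwn hxy
      (hy q hxq).not_gt hqy⟩
  have h_mono : Monotone fun q : {q : ℚ // x < q} => Iio (q : ℝ) :=
    fun q r hqr => Iio_subset_Iio (Rat.cast_le.2 hqr)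
  have : Nonempty {q : ℚ // x < q} := let ⟨q, hq⟩ := exists_rat_gt x; ⟨⟨q, hq⟩⟩
  rw [h_inter, h_mono.directed_ge.measure_iInter (fun _ => measurableSet_Iio.nullMeasurableSet)
    ⟨Classical.arbitrary _, measure_ne_top _ _⟩, iInf_lt_iff] at h
  obtain ⟨⟨q, hxq⟩, hq⟩ := h
  exact ⟨q, hxq, hq⟩

theorem tendsto_measure_Iio_of_forall_rat [IsFiniteMeasure ν] {A : ℕ → ℝ → ℝ≥0∞}
    (hA : ∀ m, Monotone (A m)) (hq : ∀ q : ℚ, Tendsto (A · q) atTop (𝓝 (ν (Iio q))))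
    {x : ℝ} (hx : ν {x} = 0) : Tendsto (A · x) atTop (𝓝 (ν (Iio x))) := by
  refine tendsto_order.2 ⟨fun a ha => ?_, fun b hb => ?_⟩
  · obtain ⟨q, hqx, haq⟩ := exists_rat_lt_and_lt_measure_Iio ν ha
    exact ((hq q).eventually (lt_mem_nhds haq)).mono fun m hm => hm.trans_le (hA m hqx.le)
  · rw [measure_congr (Iio_ae_eq_Iic' hx)] at hb
    obtain ⟨q, hxq, hqb⟩ := exists_rat_gt_and_measure_Iio_lt ν hb
    exact ((hq q).eventually (gt_mem_nhds hqb)).mono fun m hm => (hA m hxq.le).trans_lt hm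

end Real

theorem Ergodic.exists_ae_tendsto_birkhoffAverage_indicator_preimage_Iio {Ω : Type*}
    [MeasurableSpace Ω] {μ : Measure Ω} [IsProbabilityMeasure μ] {T : Ω → Ω} (hT : Ergodic T μ)
    {f : Ω → ℝ} (hf : Measurable f) : ∃ φ : ℕ → ℕ, ∀ᵐ ω ∂μ, Tendsto
      (fun m => ENNReal.ofReal (birkhoffAverage ℝ T ((f ⁻¹' Iio (f ω)).indicator 1) (φ m) ω))
      atTop (𝓝 (μ.map f (Iio (f ω)))) := by
  set ν := μ.map f
  -- At an atom `f ω` of `ν` the rank average is itself one of the controlled averages;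
  -- elsewhere it is squeezed between rational ones.
  set Y : Set ℝ := range ((↑) : ℚ → ℝ) ∪ {a | 0 < ν {a}}
  have : Countable Y := by
    refine ((countable_range _).union ?_).to_subtype
    simpa using Measure.countable_meas_level_set_pos (μ := ν) measurable_id
  let A (y : ℝ) (N : ℕ) : Ω → ℝ := birkhoffAverage ℝ T ((f ⁻¹' Iio y).indicator 1) N
  have hA_mono (N : ℕ) (ω : Ω) : Monotone fun y => ENNReal.ofReal (A y N ω) := fun y y' hyy' =>
    ENNReal.ofReal_le_ofReal (birkhoffAverage_mono T (indicator_le_indicator_of_subset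
      (preimage_mono (Iio_subset_Iio hyy')) fun _ => zero_le_one) N ω)
  have hA_conv (y : ℝ) : TendstoInMeasure μ (A y) atTop fun _ => μ.real (f ⁻¹' Iio y) := by
    have hs : MeasurableSet (f ⁻¹' Iio y) := hf measurableSet_Iio
    rw [← integral_indicator_one hs]
    exact hT.tendstoInMeasure_birkhoffAverage
      (memLp_indicator_const 2 hs 1 (.inr (measure_ne_top _ _)))
  obtain ⟨φ, -, hφ⟩ := exists_strictMono_ae_tendsto_of_tendstoInMeasure fun y : Y => hA_conv y
  refine ⟨φ, hφ.mono fun ω hω => ?_⟩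
  have hA_lim (y : ℝ) (hy : y ∈ Y) :
      Tendsto (fun m => ENNReal.ofReal (A y (φ m) ω)) atTop (𝓝 (ν (Iio y))) := by
    have := ENNReal.tendsto_ofReal (hω ⟨y, hy⟩)
    rwa [ofReal_measureReal, ← Measure.map_apply hf measurableSet_Iio] at this
  by_cases hx : ν {f ω} = 0
  · exact tendsto_measure_Iio_of_forall_rat ν (fun m => hA_mono (φ m) ω)
      (fun q => hA_lim q (.inl ⟨q, rfl⟩)) hx
  · exact hA_lim (f ω) (.inr (pos_iff_ne_zero.2 hx))

end MeasureTheory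

theorem measurable_aeEqClosure_ordAlg_apply {Ω : Type*} [MeasurableSpace Ω] {μ : Measure Ω}
    [IsProbabilityMeasure μ] {T : Ω → Ω} (hT : Ergodic T μ) {n : ℕ} {X : Ω → Fin n → ℝ}
    (hX : Measurable X) (i : Fin n) : Measurable[aeEqClosure (ordAlg X T) μ] fun ω => X ω i := by
  have hf : Measurable fun ω => X ω i := (measurable_pi_apply i).comp hX
  obtain ⟨φ, hφ⟩ := hT.exists_ae_tendsto_birkhoffAverage_indicator_preimage_Iio hf
  have h_rank : Measurable[aeEqClosure (ordAlg X T) μ] fun ω => μ.map (X · i) (Iio (X ω i)) :=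
    measurable_aeEqClosure_of_ae_eq (Measurable.limsup fun m => ENNReal.measurable_ofReal.comp
      (measurable_ordAlg_birkhoffAverage_indicator_preimage_Iio X T i (φ m)))
      (hφ.mono fun ω h => h.limsup_eq.symm)
  refine measurable_of_Iic (mδ := aeEqClosure (ordAlg X T) μ) fun t =>
    measurableSet_aeEqClosure_of_ae_eq (h_rank (measurableSet_Iio (a := μ.map (X · i) (Iic t)))) ?_
  exact (ae_of_ae_map hf.aemeasurable (Iic_ae_eq_setOf_measure_Iio_lt (μ.map (X · i)) t)).mono
    fun ω hω => hω.symm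

/-- For an ergodic measure-preserving `T` and measurable
`X : Ω → ℝⁿ`, the σ-algebra `σ(X)` is contained, modulo `μ`-null sets, in the
ordinal σ-algebra `σ(𝒫(X,T))`. -/
theorem stmt5 {Ω : Type*} [MeasurableSpace Ω] (μ : Measure Ω) [IsProbabilityMeasure μ]
    (T : Ω → Ω) (hT : Ergodic T μ)
    {n : ℕ} (X : Ω → Fin n → ℝ) (hX : Measurable X) :
    ∀ s : Set Ω, MeasurableSet[MeasurableSpace.comap X (borel (Fin n → ℝ))] s →
      ∃ t : Set Ω, MeasurableSet[ordAlg X T] t ∧ μ (symmDiff s t) = 0 := by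
  intro s hs
  have hX' : Measurable[aeEqClosure (ordAlg X T) μ] X :=
    @measurable_pi_lambda _ _ _ (aeEqClosure (ordAlg X T) μ) _ X fun i =>
      measurable_aeEqClosure_ordAlg_apply hT hX i
  rw [← BorelSpace.measurable_eq] at hs
  obtain ⟨t, ht, hst⟩ := hX'.comap_le s hs
  exact ⟨t, ht, measure_symmDiff_eq_zero_iff.2 hst⟩
end

section
/- Let X : Ω → Y be a continuous map between Hausdorff topological spaces with Ω second countable and locally compact. Then the set of non-injectivity D(X) = {ω ∈ Ω : X⁻¹(X(ω)) ≠ {ω}} is an F_σ subset of Ω; in particular it is Borel. -/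
open Set

/-- For a continuous map `X : Ω → Y` between Hausdorff spaces with
`Ω` second countable and locally compact, the set of non-injectivity
`D(X) = {ω : X⁻¹(X ω) ≠ {ω}}` is an `F_σ` subset of `Ω`; in particular it is
Borel. -/
theorem stmt10 {Ω Y : Type*} [TopologicalSpace Ω] [T2Space Ω]
    [SecondCountableTopology Ω] [LocallyCompactSpace Ω]
    [TopologicalSpace Y] [T2Space Y]
    (X : Ω → Y) (hX : Continuous X)
    (D : Set Ω) (hD : D = {ω | X ⁻¹' {X ω} ≠ {ω}}) :
    (∃ f : ℕ → Set Ω, (∀ i, IsClosed (f i)) ∧ D = ⋃ i, f i) ∧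
    @MeasurableSet Ω (borel Ω) D := by
  classical
  set B := TopologicalSpace.countableBasis Ω with hB
  have hBasis := TopologicalSpace.isBasis_countableBasis Ω
  have hBcount := TopologicalSpace.countable_countableBasis Ω
  set T : Set (Set Ω × Set Ω) :=
    {p | p.1 ∈ B ∧ p.2 ∈ B ∧ IsCompact (closure p.1) ∧ IsCompact (closure p.2) ∧
      closure p.1 ∩ closure p.2 = ∅} with hT
  have hTcount : T.Countable := by
    apply Set.Countable.mono _ (hBcount.prod hBcount)
    rintro ⟨u, v⟩ ⟨h1, h2, -⟩
    exact ⟨h1, h2⟩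
  set g : Set Ω × Set Ω → Set Ω := fun p => closure p.1 ∩ X ⁻¹' (X '' closure p.2) with hg
  have hclosed : ∀ p ∈ T, IsClosed (g p) := by
    rintro p ⟨-, -, -, h2, -⟩
    exact isClosed_closure.inter ((h2.image hX).isClosed.preimage hX)
  have hDU : D = ⋃ p ∈ T, g p := by
    ext ω
    constructor
    · intro hω
      rw [hD] at hω
      have hmem : ω ∈ X ⁻¹' {X ω} := rfl
      obtain ⟨ω', hω', hne⟩ : ∃ ω', ω' ∈ X ⁻¹' {X ω} ∧ ω' ≠ ω := by
        by_contra hcon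
        push_neg at hcon
        apply hω
        apply Set.Subset.antisymm
        · intro x hx; exact hcon x hx
        · intro x hx; simp at hx; subst hx; exact hmem
      obtain ⟨W', W, hW', hW, hmW', hmW, hdisj⟩ := t2_separation hne
      obtain ⟨K, hK, hKmem, hKsub⟩ := exists_compact_subset hW hmW
      obtain ⟨K', hK', hKmem', hKsub'⟩ := exists_compact_subset hW' hmW'
      obtain ⟨U, hUB, hUm, hUs⟩ :=
        hBasis.exists_subset_of_mem_open hKmem isOpen_interior
      obtain ⟨V, hVB, hVm, hVs⟩ :=
        hBasis.exists_subset_of_mem_open hKmem' isOpen_interior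
      have hclU : closure U ⊆ K :=
        closure_minimal (hUs.trans interior_subset) hK.isClosed
      have hclV : closure V ⊆ K' :=
        closure_minimal (hVs.trans interior_subset) hK'.isClosed
      have hcU : IsCompact (closure U) := hK.of_isClosed_subset isClosed_closure hclU
      have hcV : IsCompact (closure V) := hK'.of_isClosed_subset isClosed_closure hclV
      have hdis : closure U ∩ closure V = ∅ := by
        apply Set.eq_empty_of_forall_notMem
        rintro x ⟨hx1, hx2⟩
        exact hdisj.le_bot ⟨hKsub' (hclV hx2), hKsub (hclU hx1)⟩
      refine Set.mem_biUnion (show (U, V) ∈ T from ⟨hUB, hVB, hcU, hcV, hdis⟩) ?_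
      exact ⟨subset_closure hUm, ⟨ω', subset_closure hVm, hω'⟩⟩
    · intro hω
      obtain ⟨p, hpT, hpm⟩ := Set.mem_iUnion₂.mp hω
      obtain ⟨hω1, ω', hω'2, hXeq⟩ := hpm
      rw [hD]
      intro heq
      have hω'mem : ω' ∈ X ⁻¹' {X ω} := by simp [hXeq]
      rw [heq] at hω'mem
      simp at hω'mem
      subst hω'mem
      obtain ⟨-, -, -, -, hdis⟩ := hpT
      have : ω' ∈ closure p.1 ∩ closure p.2 := ⟨hω1, hω'2⟩
      rw [hdis] at this
      exact this
  -- convert countable biUnion to ℕ-indexed union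
  have hFσ : ∃ f : ℕ → Set Ω, (∀ i, IsClosed (f i)) ∧ D = ⋃ i, f i := by
    rcases T.eq_empty_or_nonempty with hTe | hTne
    · refine ⟨fun _ => ∅, fun _ => isClosed_empty, ?_⟩
      simp [hDU, hTe]
    · obtain ⟨e, he⟩ := hTcount.exists_eq_range hTne
      refine ⟨fun i => g (e i), fun i => hclosed _ (by rw [he]; exact ⟨i, rfl⟩), ?_⟩
      rw [hDU, he, biUnion_range]
  refine ⟨hFσ, ?_⟩
  obtain ⟨f, hf, hfe⟩ := hFσ
  letI : MeasurableSpace Ω := borel Ω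
  haveI : BorelSpace Ω := ⟨rfl⟩
  rw [hfe]
  exact MeasurableSet.iUnion fun i => (hf i).measurableSet
end

section
/- Let Ω and Y be Polish spaces, μ a measure on the Borel σ-algebra of Ω, and X : Ω → Y continuous. Suppose the set of non-injectivity D(X) = {ω : ∃ω' ≠ ω, X(ω') = X(ω)} is Borel with μ(D(X)) = 0. Then the σ-algebra σ(X) of preimages of Borel sets of Y under X is equivalent modulo μ-null sets to the Borel σ-algebra of Ω. -/
open MeasureTheory Set

/-- For Polish spaces `Ω`, `Y`, a measure `μ` on the Borel
σ-algebra of `Ω`, and a continuous `X : Ω → Y` whose set of non-injectivity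
`D(X)` is Borel and `μ`-null, the σ-algebra `σ(X)` of preimages of Borel sets
is equivalent modulo `μ`-null sets to the Borel σ-algebra of `Ω`. -/
theorem stmt12 {Ω Y : Type*}
    [TopologicalSpace Ω] [PolishSpace Ω] [MeasurableSpace Ω] [BorelSpace Ω]
    [TopologicalSpace Y] [PolishSpace Y]
    (μ : Measure Ω)
    (X : Ω → Y) (hX : Continuous X)
    (D : Set Ω) (hD : D = {ω | ∃ ω', ω' ≠ ω ∧ X ω' = X ω})
    (hDmeas : MeasurableSet D) (hDnull : μ D = 0) :
    (∀ s : Set Ω, MeasurableSet s →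
      ∃ t : Set Ω, MeasurableSet[MeasurableSpace.comap X (borel Y)] t ∧ μ (symmDiff s t) = 0) ∧
    (∀ s : Set Ω, MeasurableSet[MeasurableSpace.comap X (borel Y)] s →
      ∃ t : Set Ω, MeasurableSet t ∧ μ (symmDiff s t) = 0) := by
  letI : MeasurableSpace Y := borel Y
  haveI : BorelSpace Y := ⟨rfl⟩
  have hXmeas : Measurable X := hX.measurable
  constructor
  · intro s hs
    have hinj : InjOn X Dᶜ := by
      intro a ha b hb hab
      by_contra hne
      exact ha (hD ▸ ⟨b, hne ∘ Eq.symm, hab.symm⟩)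
    have him : MeasurableSet (X '' (s ∩ Dᶜ)) :=
      (hs.inter hDmeas.compl).image_of_continuousOn_injOn hX.continuousOn
        (hinj.mono (inter_subset_right))
    refine ⟨X ⁻¹' (X '' (s ∩ Dᶜ)), ⟨X '' (s ∩ Dᶜ), him, rfl⟩, ?_⟩
    refine measure_mono_null ?_ hDnull
    intro ω hω
    rw [Set.mem_symmDiff] at hω
    by_contra hωD
    rcases hω with ⟨hωs, hωt⟩ | ⟨hωt, hωs⟩
    · exact hωt ⟨ω, ⟨hωs, hωD⟩, rfl⟩
    · rcases hωt with ⟨ω', ⟨hω's, hω'D⟩, hXω⟩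
      have : ω' = ω := hinj hω'D hωD hXω
      exact hωs (this ▸ hω's)
  · rintro s ⟨u, hu, rfl⟩
    exact ⟨X ⁻¹' u, hXmeas hu, by simp⟩
end

section
/- Let Ω be a smooth m-dimensional manifold and let k ≥ 2(m+n). Then there exists a smooth map G : Ω → M(n,k) (into n×k real matrices) such that for every pair of distinct points ω ≠ ω' in Ω, the (2n × k) matrix obtained by stacking G(ω) on top of G(ω') has full rank 2n. -/
/-
Whitney's easy embedding argument gives a smooth injective `f : Ω → ℝ^(2m+1)`. For a `C¹` map
`F` into a finite-dimensional space, the secant cone `{t • (F x - F y)}` is the image of the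
`(2m+1)`-manifold `ℝ × Ω × Ω`, so its Hausdorff dimension is at most `2m+1`; while the ambient
dimension is larger, projecting along a direction outside the cone keeps `F` injective. This
turns a bump-function embedding into a map `gⱼ` injective on the compact layer `h⁻¹[j, j+1]` of a
proper smooth `h : Ω → ℝ` and vanishing off `h⁻¹(j-1, j+2)`. Those sets are disjoint for distinct
`j` of the same residue mod 3, so `σₜ = ∑_{j ≡ t} gⱼ` is smooth and agrees with `gⱼ` on the
`j`-th layer; hence `(h, σ₀, σ₁, σ₂)` is injective, and it is projected once more.

Then `G ω = [1 | T(p_ω)]`, where `p_ω` is the polynomial of degree `≤ 2m` with coefficient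
vector `f ω` and row `i` of `T(p)` lists the coefficients of `X^i * p`. If a combination with
coefficients `a, b` of the rows of `Φ(G ω, G ω')` vanishes, the identity block gives `b = -a`,
and the other `k - n ≥ n + 2m` columns give `(∑ aᵢ Xⁱ) * (p_ω - p_ω') = 0`, so `a = 0`.
-/

open Set Filter Manifold Module Polynomial

noncomputable def identityToeplitz {R : Type*} [Semiring R] (n k : ℕ) (p : R[X]) :
    Fin n → Fin k → R :=
  fun i j => if (j : ℕ) < n then (if (j : ℕ) = i then 1 else 0) else (X ^ (i : ℕ) * p).coeff (j - n)

lemma coeff_sum_C_mul_X_pow {R : Type*} [Semiring R] {n : ℕ} (a : Fin n → R) (i : Fin n) :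
    (∑ l : Fin n, C (a l) * X ^ (l : ℕ)).coeff i = a i := by
  simp [coeff_C_mul, coeff_X_pow, Fin.val_inj]

theorem linearIndependent_identityToeplitz {R : Type*} [CommRing R] [IsDomain R] {n k : ℕ}
    {p q : R[X]} (hpq : p ≠ q) (hk : (p - q).natDegree + 2 * n ≤ k) :
    LinearIndependent R (Sum.elim (identityToeplitz n k p) (identityToeplitz n k q)) := by
  rw [Fintype.linearIndependent_iff]
  intro c hc
  have hcol : ∀ j : Fin k, ∑ i, c (.inl i) * identityToeplitz n k p i j +
      ∑ i, c (.inr i) * identityToeplitz n k q i j = 0 := fun j => by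
    simpa [Fintype.sum_sum_type] using congrFun hc j
  have hinr : ∀ i, c (.inr i) = -c (.inl i) := fun i => by
    have := hcol ⟨i, by omega⟩
    simp only [identityToeplitz, Fin.val_inj, Fin.is_lt, if_true, mul_ite, mul_one, mul_zero,
      Finset.sum_ite_eq, Finset.mem_univ] at this
    linear_combination this
  set A : R[X] := ∑ i : Fin n, C (c (.inl i)) * X ^ (i : ℕ)
  have hcoeff : ∀ l, l + n < k → (A * (p - q)).coeff l = 0 := fun l hl => by
    have := hcol ⟨l + n, hl⟩
    simp only [identityToeplitz, hinr, if_neg (show ¬ l + n < n by omega), Nat.add_sub_cancel,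
      neg_mul, Finset.sum_neg_distrib, ← sub_eq_add_neg, ← Finset.sum_sub_distrib] at this
    rw [← this, Finset.sum_mul, finsetSum_coeff]
    refine Finset.sum_congr rfl fun i _ => ?_
    rw [mul_assoc, coeff_C_mul, mul_sub, coeff_sub, mul_sub]
  have hA : A = 0 := by
    by_contra hA
    have hAn : A.natDegree < n := by
      rw [natDegree_lt_iff_degree_lt hA]; exact degree_sum_fin_lt _
    have hprod : A * (p - q) ≠ 0 := mul_ne_zero hA (sub_ne_zero.2 hpq)
    apply leadingCoeff_ne_zero.2 hprod
    apply hcoeff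
    rw [natDegree_mul hA (sub_ne_zero.2 hpq)]
    omega
  have hinl : ∀ i, c (.inl i) = 0 := fun i => by
    rw [← coeff_sum_C_mul_X_pow (fun i => c (.inl i)) i]
    exact congrArg (coeff · i) hA
  rintro (i | i)
  · exact hinl i
  · rw [hinr, hinl, neg_zero]

theorem rank_identityToeplitz {K : Type*} [Field K] {n k : ℕ} {p q : K[X]}
    (hpq : p ≠ q) (hk : (p - q).natDegree + 2 * n ≤ k) :
    (Matrix.of (Sum.elim (identityToeplitz n k p) (identityToeplitz n k q))).rank = 2 * n := by
  rw [(linearIndependent_identityToeplitz hpq hk).rank_matrix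
    (M := Matrix.of (Sum.elim (identityToeplitz n k p) (identityToeplitz n k q))),
    Fintype.card_sum, Fintype.card_fin, two_mul]

open scoped ContDiff in
theorem contDiff_identityToeplitz_degreeLTEquiv_symm (n k d : ℕ) :
    ContDiff ℝ ∞ fun z : Fin d → ℝ => identityToeplitz n k ((degreeLTEquiv ℝ d).symm z : ℝ[X]) := by
  refine contDiff_pi.2 fun i => contDiff_pi.2 fun j => ?_
  unfold identityToeplitz
  split_ifs
  · exact contDiff_const
  · exact contDiff_const
  · exact (LinearMap.toContinuousLinearMap (lcoeff ℝ (j - n) ∘ₗ LinearMap.mulLeft ℝ (X ^ (i : ℕ)) ∘ₗ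
      (degreeLT ℝ d).subtype ∘ₗ (degreeLTEquiv ℝ d).symm.toLinearMap)).contDiff

theorem rank_identityToeplitz_degreeLTEquiv_symm {n k d : ℕ} (hk : d + 2 * n ≤ k + 1)
    {z z' : Fin d → ℝ} (hz : z ≠ z') :
    (Matrix.of (Sum.elim (identityToeplitz n k ((degreeLTEquiv ℝ d).symm z : ℝ[X]))
      (identityToeplitz n k ((degreeLTEquiv ℝ d).symm z' : ℝ[X])))).rank = 2 * n := by
  set p := ((degreeLTEquiv ℝ d).symm z : ℝ[X])
  set q := ((degreeLTEquiv ℝ d).symm z' : ℝ[X])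
  have hpq : p ≠ q := fun h => hz ((degreeLTEquiv ℝ d).symm.injective (Subtype.ext h))
  have hdeg : (p - q).natDegree < d := by
    rw [natDegree_lt_iff_degree_lt (sub_ne_zero.2 hpq), ← mem_degreeLT]
    exact sub_mem ((degreeLTEquiv ℝ d).symm z).2 ((degreeLTEquiv ℝ d).symm z').2
  exact rank_identityToeplitz hpq (by omega)

def secantCone (𝕜 : Type*) {V : Type*} [Ring 𝕜] [AddCommGroup V] [Module 𝕜 V] (s : Set V) :
    Set V :=
  {v | ∃ t : 𝕜, ∃ x ∈ s, ∃ y ∈ s, t • (x - y) = v}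

section SecantCone

variable {𝕜 V W : Type*} [Ring 𝕜] [AddCommGroup V] [Module 𝕜 V] [AddCommGroup W] [Module 𝕜 W]

theorem zero_mem_secantCone {s : Set V} (hs : s.Nonempty) : 0 ∈ secantCone 𝕜 s :=
  let ⟨x, hx⟩ := hs
  ⟨0, x, hx, x, hx, zero_smul 𝕜 _⟩

theorem secantCone_image (π : V →ₗ[𝕜] W) (s : Set V) :
    secantCone 𝕜 (π '' s) = π '' secantCone 𝕜 s := by
  ext w
  constructor
  · rintro ⟨t, _, ⟨x, hx, rfl⟩, _, ⟨y, hy, rfl⟩, rfl⟩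
    exact ⟨t • (x - y), ⟨t, x, hx, y, hy, rfl⟩, by simp⟩
  · rintro ⟨_, ⟨t, x, hx, y, hy, rfl⟩, rfl⟩
    exact ⟨t, π x, mem_image_of_mem π hx, π y, mem_image_of_mem π hy, by simp⟩

end SecantCone

theorem injOn_of_ker_eq_span_singleton {𝕜 V W : Type*} [Field 𝕜] [AddCommGroup V] [Module 𝕜 V]
    [AddCommGroup W] [Module 𝕜 W] {π : V →ₗ[𝕜] W} {s : Set V} {v : V}
    (hv : v ∉ secantCone 𝕜 s) (hker : LinearMap.ker π = 𝕜 ∙ v) : InjOn π s := by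
  intro x hx y hy hxy
  obtain ⟨t, ht⟩ := Submodule.mem_span_singleton.1
    (hker ▸ LinearMap.sub_mem_ker_iff.2 hxy : x - y ∈ 𝕜 ∙ v)
  by_contra hne
  have ht0 : t ≠ 0 := by
    rintro rfl
    exact hne (sub_eq_zero.1 (by simpa using ht.symm))
  exact hv ⟨t⁻¹, x, hx, y, hy, by rw [← ht, inv_smul_smul₀ ht0]⟩

theorem exists_projection_injOn_of_dimH_secantCone_lt {V : Type*} [NormedAddCommGroup V]
    [NormedSpace ℝ V] [FiniteDimensional ℝ V] {s : Set V} (hs0 : s.Nonempty)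
    (hs : dimH (secantCone ℝ s) < finrank ℝ V) :
    ∃ (W : Submodule ℝ V) (π : V →ₗ[ℝ] W), finrank ℝ W + 1 = finrank ℝ V ∧ InjOn π s := by
  obtain ⟨v, hv⟩ := (dense_compl_of_dimH_lt_finrank hs).nonempty
  have hv0 : v ≠ 0 := fun h => hv (h ▸ zero_mem_secantCone hs0)
  obtain ⟨W, hW⟩ := Submodule.exists_isCompl (ℝ ∙ v)
  refine ⟨W, Submodule.projectionOnto W (ℝ ∙ v) hW.symm, ?_,
    injOn_of_ker_eq_span_singleton hv (Submodule.ker_projectionOnto _)⟩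
  rw [← Submodule.finrank_add_eq_of_isCompl hW, finrank_span_singleton hv0, add_comm]

theorem exists_linearMap_injOn_of_dimH_secantCone_le {D : ℕ} {V : Type*} [NormedAddCommGroup V]
    [NormedSpace ℝ V] [FiniteDimensional ℝ V] {s : Set V} (hs : dimH (secantCone ℝ s) ≤ D) :
    ∃ π : V →ₗ[ℝ] (Fin D → ℝ), InjOn π s := by
  induction hr : finrank ℝ V using Nat.strong_induction_on generalizing V s with
  | _ r ih =>
    rcases s.eq_empty_or_nonempty with rfl | hs0
    · exact ⟨0, injOn_empty _⟩
    obtain hrD | hDr := le_or_gt r D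
    · obtain ⟨π, hπ⟩ := finrank_le_iff_exists_linearMap.1
        (hr.trans_le (hrD.trans (finrank_fin_fun ℝ).ge))
      exact ⟨π, hπ.injOn⟩
    obtain ⟨W, π, hW, hπ⟩ := exists_projection_injOn_of_dimH_secantCone_lt hs0
      (hs.trans_lt (by rw [hr]; exact_mod_cast hDr))
    have hsW : dimH (secantCone ℝ (π '' s)) ≤ D := by
      rw [secantCone_image]
      exact (LinearMap.toContinuousLinearMap π).lipschitz.dimH_image_le _ |>.trans hs
    obtain ⟨ρ, hρ⟩ := ih _ (by omega) hsW rfl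
    exact ⟨ρ ∘ₗ π, hρ.comp hπ (mapsTo_image π s)⟩

theorem notMem_Ioo_of_mem_Icc_of_intCast_eq {j j' : ℤ} (hjj' : (j' : ZMod 3) = j) (hne : j' ≠ j)
    {r : ℝ} (hr : r ∈ Icc (j : ℝ) (j + 1)) : r ∉ Ioo (j' - 1 : ℝ) (j' + 2) := by
  have h3 := (ZMod.intCast_eq_intCast_iff_dvd_sub j j' 3).1 hjj'.symm
  rintro ⟨h1, h2⟩
  rcases (by omega : j + 3 ≤ j' ∨ j' + 3 ≤ j) with h | h
  · have : (j : ℝ) + 3 ≤ j' := by exact_mod_cast h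
    linarith [hr.2]
  · have : (j' : ℝ) + 3 ≤ j := by exact_mod_cast h
    linarith [hr.1]

theorem locallyFinite_Ioo_intCast_sub_one_add_two :
    LocallyFinite fun j : ℤ => Ioo ((j : ℝ) - 1) (j + 2) :=
  locallyFinite_Ioo_of_tendsto (tendsto_atTop_add_const_right _ _ tendsto_intCast_atTop_atTop)
    (tendsto_atBot_add_const_right _ _ (tendsto_intCast_atBot_iff.2 tendsto_id))

section Manifold

open scoped ContDiff

variable {E H M : Type*} [NormedAddCommGroup E] [NormedSpace ℝ E] [TopologicalSpace H]
  {I : ModelWithCorners ℝ E H} [TopologicalSpace M] [ChartedSpace H M]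

theorem exists_contMDiff_eq_on_layers {V : Type*} [NormedAddCommGroup V] [NormedSpace ℝ V]
    {h : M → ℝ} (hh : Continuous h) {g : ℤ → M → V} (hg : ∀ j, ContMDiff I 𝓘(ℝ, V) ∞ (g j))
    (hg_zero : ∀ (j : ℤ), ∀ x ∉ h ⁻¹' Ioo ((j : ℝ) - 1) (j + 2), g j x = 0) :
    ∃ σ : ZMod 3 → M → V, (∀ t, ContMDiff I 𝓘(ℝ, V) ∞ (σ t)) ∧
      ∀ (j : ℤ) (x : M), h x ∈ Icc (j : ℝ) (j + 1) → σ j x = g j x := by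
  refine ⟨fun t x => ∑ᶠ j : ℤ, if (j : ZMod 3) = t then g j x else 0, fun t => ?_,
    fun j x hx => ?_⟩
  · refine contMDiff_finsum (fun j => by split_ifs <;> [exact hg j; exact contMDiff_const])
      ((locallyFinite_Ioo_intCast_sub_one_add_two.preimage_continuous hh).subset
        fun j x hx => ?_)
    by_contra hxj
    split_ifs at hx <;> [exact hx (hg_zero j x hxj); exact hx rfl]
  · refine (finsum_eq_single _ j fun j' hj' => ?_).trans (if_pos rfl)
    split_ifs with hc
    · exact hg_zero j' x (notMem_Ioo_of_mem_Icc_of_intCast_eq hc hj' hx)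
    · rfl

variable [FiniteDimensional ℝ E]

theorem ContMDiff.dimH_range_le [I.Boundaryless] [IsManifold I 1 M] [SecondCountableTopology M]
    {F : Type*} [NormedAddCommGroup F] [NormedSpace ℝ F] {f : M → F}
    (hf : ContMDiff I 𝓘(ℝ, F) 1 f) : dimH (range f) ≤ finrank ℝ E := by
  have hchart : ∀ x, dimH (f '' (extChartAt I x).source) ≤ finrank ℝ E := fun x => by
    have hsm : ContDiffOn ℝ 1 (f ∘ (extChartAt I x).symm) (extChartAt I x).target := by
      simpa only [extChartAt_model_space_eq_id, PartialEquiv.refl_coe, Function.id_comp,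
        PartialEquiv.refl_source, preimage_univ, inter_univ] using (contMDiff_iff.1 hf).2 x (f x)
    rw [← (extChartAt I x).symm_image_target_eq_source, ← image_comp]
    calc dimH ((f ∘ (extChartAt I x).symm) '' (extChartAt I x).target)
        ≤ dimH (extChartAt I x).target := dimH_image_le_of_locally_lipschitzOn fun a ha =>
          let ⟨K, t, ht, hK⟩ := (hsm.contDiffAt
            ((isOpen_extChartAt_target x).mem_nhds ha)).exists_lipschitzOnWith
          ⟨K, t, mem_nhdsWithin_of_mem_nhds ht, hK⟩
      _ ≤ finrank ℝ E := (dimH_mono (subset_univ _)).trans (Real.dimH_univ_eq_finrank E).le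
  obtain ⟨T, hT, hcover⟩ := TopologicalSpace.countable_cover_nhds
    (fun x : M => extChartAt_source_mem_nhds (I := I) x)
  calc dimH (range f) ≤ dimH (⋃ x ∈ T, f '' (extChartAt I x).source) := by
        refine dimH_mono ?_
        rintro _ ⟨z, rfl⟩
        obtain ⟨x, hx, hz⟩ := mem_iUnion₂.1 (hcover ▸ mem_univ z)
        exact mem_iUnion₂.2 ⟨x, hx, mem_image_of_mem f hz⟩
    _ = ⨆ x ∈ T, dimH (f '' (extChartAt I x).source) := dimH_bUnion hT _
    _ ≤ finrank ℝ E := iSup₂_le fun x _ => hchart x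

theorem ContMDiff.dimH_secantCone_range_le [I.Boundaryless] [IsManifold I 1 M]
    [SecondCountableTopology M] {V : Type*} [NormedAddCommGroup V] [NormedSpace ℝ V]
    {F : M → V} (hF : ContMDiff I 𝓘(ℝ, V) 1 F) :
    dimH (secantCone ℝ (range F)) ≤ 2 * finrank ℝ E + 1 := by
  have hcone : secantCone ℝ (range F) = range fun p : ℝ × M × M => p.1 • (F p.2.1 - F p.2.2) := by
    ext v
    constructor
    · rintro ⟨t, _, ⟨x, rfl⟩, _, ⟨y, rfl⟩, rfl⟩
      exact ⟨(t, x, y), rfl⟩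
    · rintro ⟨⟨t, x, y⟩, rfl⟩
      exact ⟨t, F x, mem_range_self x, F y, mem_range_self y, rfl⟩
  have hsm : ContMDiff (𝓘(ℝ, ℝ).prod (I.prod I)) 𝓘(ℝ, V) 1
      fun p : ℝ × M × M => p.1 • (F p.2.1 - F p.2.2) :=
    contMDiff_fst.smul ((hF.comp (contMDiff_fst.comp contMDiff_snd)).sub
      (hF.comp (contMDiff_snd.comp contMDiff_snd)))
  rw [hcone]
  convert hsm.dimH_range_le using 1
  simp only [finrank_prod, finrank_self]
  push_cast
  ring

theorem ContMDiff.exists_linearMap_injOn_range [I.Boundaryless] [IsManifold I 1 M]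
    [SecondCountableTopology M] {V : Type*} [NormedAddCommGroup V] [NormedSpace ℝ V]
    [FiniteDimensional ℝ V] {F : M → V} (hF : ContMDiff I 𝓘(ℝ, V) 1 F) :
    ∃ π : V →ₗ[ℝ] (Fin (2 * finrank ℝ E + 1) → ℝ), InjOn π (range F) :=
  exists_linearMap_injOn_of_dimH_secantCone_le (by exact_mod_cast hF.dimH_secantCone_range_le)

theorem exists_contMDiff_isCompact_preimage_Iic [T2Space M] [SigmaCompactSpace M]
    [IsManifold I ∞ M] : ∃ h : M → ℝ, ContMDiff I 𝓘(ℝ) ∞ h ∧ ∀ r, IsCompact (h ⁻¹' Iic r) := by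
  have : LocallyCompactSpace H := I.locallyCompactSpace
  have : LocallyCompactSpace M := ChartedSpace.locallyCompactSpace H M
  let K := CompactExhaustion.choice M
  obtain ⟨ρ, hρ⟩ := SmoothPartitionOfUnity.exists_isSubordinate I isClosed_univ
    (fun j : ℕ => interior (K (j + 1))) (fun _ => isOpen_interior)
    (fun x _ => mem_iUnion.2 ⟨K.find x, K.subset_interior_succ _ (K.mem_find x)⟩)
  set h : M → ℝ := fun x => ∑ᶠ j, ρ j x • (j : ℝ)
  have hsm : ContMDiff I 𝓘(ℝ) ∞ h := ρ.contMDiff_finsum_smul fun j x _ => contMDiffAt_const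
  have hK : ∀ (N : ℕ) (x : M), x ∉ K N → (N : ℝ) ≤ h x := fun N x hx =>
    ρ.finsum_smul_mem_convex (g := fun j _ => (j : ℝ)) (t := Ici (N : ℝ)) (mem_univ x)
      (fun j hj => by
        by_contra hjN
        exact hx (K.subset (by simp only [mem_Ici, not_le, Nat.cast_lt] at hjN; omega)
          (interior_subset (hρ j (subset_tsupport _ hj))))) (convex_Ici _)
  refine ⟨h, hsm, fun r => (K.isCompact (⌊r⌋₊ + 1)).of_isClosed_subset
    (isClosed_Iic.preimage hsm.continuous) fun x hx => ?_⟩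
  by_contra hxK
  have hN := hK _ x hxK
  push_cast at hN
  linarith [Nat.lt_floor_add_one r, show h x ≤ r from hx]

theorem exists_contMDiff_injOn_of_isCompact [I.Boundaryless] [IsManifold I ∞ M] [T2Space M]
    [SecondCountableTopology M] {s U : Set M} (hs : IsCompact s) (hU : IsOpen U) (hsU : s ⊆ U) :
    ∃ g : M → (Fin (2 * finrank ℝ E + 1) → ℝ),
      ContMDiff I 𝓘(ℝ, Fin (2 * finrank ℝ E + 1) → ℝ) ∞ g ∧ InjOn g s ∧ ∀ x ∉ U, g x = 0 := by
  have : LocallyCompactSpace H := I.locallyCompactSpace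
  have : LocallyCompactSpace M := ChartedSpace.locallyCompactSpace H M
  obtain ⟨ι, fs, hfs⟩ := SmoothBumpCovering.exists_isSubordinate I hs.isClosed
    (U := fun _ => U) fun x hx => hU.mem_nhds (hsU hx)
  let J := {i // (Function.support ⇑(fs i) ∩ s).Nonempty}
  have : Finite J := (fs.locallyFinite.finite_nonempty_inter_compact hs).to_subtype
  have := Fintype.ofFinite J
  let e : M → (J → E × ℝ) := fun x i => (fs i x • extChartAt I (fs.c i) x, fs i x)
  have he : ContMDiff I 𝓘(ℝ, J → E × ℝ) ∞ e := contMDiff_pi_space.2 fun i =>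
    ((fs i).contMDiff_smul contMDiffOn_extChartAt).prodMk_space (fs i).contMDiff
  have he_inj : InjOn e s := by
    intro x hx y _ h
    obtain ⟨h₁, h₂⟩ := Prod.mk_inj.1 (congrFun h ⟨fs.ind x hx, x, fs.mem_support_ind x hx, hx⟩)
    rw [fs.apply_ind x hx] at h₂
    rw [← h₂, fs.apply_ind x hx, one_smul, one_smul] at h₁
    exact (extChartAt I _).injOn (fs.mem_extChartAt_ind_source x hx)
      (fs.mem_extChartAt_source_of_eq_one h₂.symm) h₁
  have he_zero : ∀ x ∉ U, e x = 0 := fun x hx => by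
    have hx0 : ∀ i, fs i x = 0 := fun i => by
      by_contra h
      exact hx (hfs.support_subset i h)
    funext i
    simp [e, hx0]
  obtain ⟨π, hπ⟩ := (he.of_le (by simp)).exists_linearMap_injOn_range
  refine ⟨fun x => π (e x), (LinearMap.toContinuousLinearMap π).contMDiff.comp he,
    fun x hx y hy h => he_inj hx hy (hπ (mem_range_self x) (mem_range_self y) h),
    fun x hx => by simp [he_zero x hx]⟩

theorem exists_contMDiff_injective [I.Boundaryless] [IsManifold I ∞ M] [T2Space M]
    [SecondCountableTopology M] :
    ∃ f : M → (Fin (2 * finrank ℝ E + 1) → ℝ),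
      ContMDiff I 𝓘(ℝ, Fin (2 * finrank ℝ E + 1) → ℝ) ∞ f ∧ Function.Injective f := by
  have : LocallyCompactSpace H := I.locallyCompactSpace
  have : LocallyCompactSpace M := ChartedSpace.locallyCompactSpace H M
  obtain ⟨h, hh, hcpt⟩ := exists_contMDiff_isCompact_preimage_Iic (I := I) (M := M)
  choose g hg hg_inj hg_zero using fun j : ℤ =>
    exists_contMDiff_injOn_of_isCompact (I := I)
      ((hcpt (j + 1)).of_isClosed_subset (isClosed_Icc.preimage hh.continuous)
        (preimage_mono Icc_subset_Iic_self))
      (isOpen_Ioo.preimage hh.continuous)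
      (preimage_mono (Icc_subset_Ioo (by linarith) (by linarith)) :
        h ⁻¹' Icc (j : ℝ) (j + 1) ⊆ h ⁻¹' Ioo (j - 1) (j + 2))
  obtain ⟨σ, hσ, hσ_eq⟩ := exists_contMDiff_eq_on_layers hh.continuous hg hg_zero
  let F : M → ℝ × (ZMod 3 → Fin (2 * finrank ℝ E + 1) → ℝ) := fun x => (h x, fun t => σ t x)
  have hF : ContMDiff I 𝓘(ℝ, ℝ × (ZMod 3 → Fin (2 * finrank ℝ E + 1) → ℝ)) ∞ F :=
    hh.prodMk_space (contMDiff_pi_space.2 hσ)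
  have hF_inj : Function.Injective F := by
    intro x y hxy
    obtain ⟨hxy₁, hxy₂⟩ := Prod.mk_inj.1 hxy
    have hx : h x ∈ Icc (⌊h x⌋ : ℝ) (⌊h x⌋ + 1) := ⟨Int.floor_le _, (Int.lt_floor_add_one _).le⟩
    have hy : h y ∈ Icc (⌊h x⌋ : ℝ) (⌊h x⌋ + 1) := hxy₁ ▸ hx
    refine hg_inj _ hx hy ?_
    rw [← hσ_eq _ x hx, ← hσ_eq _ y hy]
    exact congrFun hxy₂ _
  obtain ⟨π, hπ⟩ := (hF.of_le (by simp)).exists_linearMap_injOn_range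
  exact ⟨fun x => π (F x), (LinearMap.toContinuousLinearMap π).contMDiff.comp hF,
    fun x y hxy => hF_inj (hπ (mem_range_self x) (mem_range_self y) hxy)⟩

end Manifold

/-- Let `Ω` be a smooth `m`-dimensional manifold and `k ≥ 2(m+n)`.
Then there is a smooth map `G : Ω → M(n,k)` into the `n × k` real matrices such
that for all distinct `ω ≠ ω'` in `Ω`, the `(2n × k)` matrix obtained by
stacking `G ω` on top of `G ω'` has full rank `2n`. -/
theorem stmt15 {m n k : ℕ} (hk : 2 * (m + n) ≤ k)
    {Ω : Type*} [TopologicalSpace Ω] [T2Space Ω] [SecondCountableTopology Ω]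
    [ChartedSpace (EuclideanSpace ℝ (Fin m)) Ω]
    [IsManifold (𝓘(ℝ, EuclideanSpace ℝ (Fin m))) (⊤ : ℕ∞) Ω] :
    ∃ G : Ω → (Fin n → Fin k → ℝ),
      ContMDiff (𝓘(ℝ, EuclideanSpace ℝ (Fin m))) (𝓘(ℝ, Fin n → Fin k → ℝ)) (⊤ : ℕ∞) G ∧
      ∀ ω ω' : Ω, ω ≠ ω' →
        (Matrix.of (Sum.elim (G ω) (G ω'))).rank = 2 * n := by
  obtain ⟨f, hf, hf_inj⟩ := exists_contMDiff_injective (I := 𝓘(ℝ, EuclideanSpace ℝ (Fin m)))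
    (M := Ω)
  refine ⟨fun ω => identityToeplitz n k ((degreeLTEquiv ℝ _).symm (f ω) : ℝ[X]),
    (contDiff_identityToeplitz_degreeLTEquiv_symm n k _).contMDiff.comp hf, fun ω ω' hne => ?_⟩
  exact rank_identityToeplitz_degreeLTEquiv_symm
    (by rw [finrank_euclideanSpace_fin]; omega) (hf_inj.ne hne)
end

section
/- In a finite-dimensional real vector space V, a Borel subset T ⊆ V is prevalent if and only if the complement V \ T has Lebesgue measure zero. -/
open MeasureTheory Set

lemma image_add_eq_preimage {d : ℕ} (S : Set (Fin d → ℝ)) (v : Fin d → ℝ) :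
    (· + v) '' S = (· + (-v)) ⁻¹' S := by
  ext x
  constructor
  · rintro ⟨s, hs, rfl⟩
    simpa using hs
  · intro h
    exact ⟨x + (-v), h, neg_add_cancel_right x v⟩

/-- In a finite-dimensional real vector space `V ≅ ℝ^d`, a Borel
set `T` is prevalent (its complement is contained in a Borel set `S` admitting a
transverse measure: a measure `μ` with a compact set `U`, `0 < μ U < ∞`, and
`μ (S + v) = 0` for all `v`) if and only if `V \ T` has Lebesgue measure zero. -/
theorem stmt17 (d : ℕ) (T : Set (Fin d → ℝ)) (hT : MeasurableSet T) :
    (∃ S : Set (Fin d → ℝ), MeasurableSet S ∧ Tᶜ ⊆ S ∧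
      ∃ μ : Measure (Fin d → ℝ),
        (∃ U : Set (Fin d → ℝ), IsCompact U ∧ 0 < μ U ∧ μ U < ⊤) ∧
        ∀ v : Fin d → ℝ, μ ((· + v) '' S) = 0) ↔
    volume Tᶜ = 0 := by
  constructor
  · rintro ⟨S, hS, hTS, μ, ⟨U, hUc, hU0, hUtop⟩, hμS⟩
    -- restrict μ to U to get a finite measure
    set ν : Measure (Fin d → ℝ) := μ.restrict U with hν
    have hνfin : IsFiniteMeasure ν := by
      constructor
      rw [hν, Measure.restrict_apply_univ]
      exact hUtop
    have hνS : ∀ v : Fin d → ℝ, ν ((· + v) '' S) = 0 := fun v =>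
      nonpos_iff_eq_zero.mp ((Measure.restrict_apply_le _ _).trans (hμS v).le)
    -- Fubini: integrate the indicator of S over translates
    have hmeas : Measurable (Function.uncurry fun (v x : Fin d → ℝ) =>
        S.indicator (fun _ => (1 : ENNReal)) (x - v)) :=
      (measurable_const.indicator hS).comp (measurable_snd.sub measurable_fst)
    have hswap : ∫⁻ v, ∫⁻ x, S.indicator (fun _ => (1 : ENNReal)) (x - v) ∂ν ∂volume
        = ∫⁻ x, ∫⁻ v, S.indicator (fun _ => (1 : ENNReal)) (x - v) ∂volume ∂ν :=
      lintegral_lintegral_swap hmeas.aemeasurable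
    have hleft : ∫⁻ v, ∫⁻ x, S.indicator (fun _ => (1 : ENNReal)) (x - v) ∂ν ∂volume = 0 := by
      have : ∀ v : Fin d → ℝ,
          ∫⁻ x, S.indicator (fun _ => (1 : ENNReal)) (x - v) ∂ν = 0 := by
        intro v
        have he : (fun x : Fin d → ℝ => S.indicator (fun _ => (1 : ENNReal)) (x - v))
            = ((· + (-v)) ⁻¹' S).indicator (fun _ => 1) := by
          ext x
          by_cases h : x + -v ∈ S <;>
            simp [Set.indicator_apply, Set.mem_preimage, sub_eq_add_neg, h]
        rw [he, lintegral_indicator_const (hS.preimage (measurable_add_const _)),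
          ← image_add_eq_preimage, hνS v, mul_zero]
      rw [lintegral_congr this, lintegral_zero]
    have hright : ∫⁻ x, ∫⁻ v, S.indicator (fun _ => (1 : ENNReal)) (x - v) ∂volume ∂ν
        = volume S * μ U := by
      have hinner : ∀ x : Fin d → ℝ,
          ∫⁻ v, S.indicator (fun _ => (1 : ENNReal)) (x - v) ∂volume = volume S := by
        intro x
        have he : (fun v : Fin d → ℝ => S.indicator (fun _ => (1 : ENNReal)) (x - v))
            = ((x - ·) ⁻¹' S).indicator (fun _ => 1) := by
          ext v
          by_cases h : x - v ∈ S <;> simp [Set.indicator_apply, Set.mem_preimage, h]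
        rw [he, lintegral_indicator_const (hS.preimage (measurable_const_sub _)),
          (Measure.measurePreserving_sub_left volume x).measure_preimage hS.nullMeasurableSet,
          one_mul]
      calc ∫⁻ x, ∫⁻ v, S.indicator (fun _ => (1 : ENNReal)) (x - v) ∂volume ∂ν
          = ∫⁻ _, volume S ∂ν := lintegral_congr hinner
        _ = volume S * ν Set.univ := by rw [lintegral_const]
        _ = volume S * μ U := by rw [hν, Measure.restrict_apply_univ]
    have key : volume S * μ U = 0 := by rw [← hright, ← hswap, hleft]
    have hS0 : volume S = 0 :=
      (mul_eq_zero.mp key).resolve_right hU0.ne'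
    exact measure_mono_null hTS hS0
  · intro h
    refine ⟨Tᶜ, hT.compl, le_refl _, volume, ⟨Metric.closedBall 0 1, isCompact_closedBall 0 1, ?_, measure_closedBall_lt_top⟩, ?_⟩
    · exact (Metric.measure_ball_pos volume 0 one_pos).trans_le (measure_mono Metric.ball_subset_closedBall)
    · intro v
      rw [image_add_eq_preimage]
      rw [(measurePreserving_add_right volume (-v)).measure_preimage hT.compl.nullMeasurableSet]
      exact h
end
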